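/- arXiv:2509.17391 — 4 statements merged into one kernel-verified Lean document; each statement's English description precedes it below -/
import Mathlib

section
/- Let $u$ be a smooth function on an open set $U \subseteq \mathbb{R}^2$ satisfying the graphical translator equation, and let $L$ denote the operator $Lv = \sum_{i,j=1}^2 a^{ij} D_iD_jv + D_2v$ with $a^{ij} = \delta^{ij} - \frac{D_iu\,D_ju}{1+|Du|^2}$. Then at every point of $U$ one has $L\big(\tfrac{|Du|^2}{2}\big) \geq \Big(1 - \frac{5|Du|^2}{1+|Du|^2}\Big)|D^2u|^2$, where $|D^2u|^2 = \sum_{i,j=1}^2 (D_iD_ju)^2$. -/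
open Metric Real

noncomputable section

/-- The plane `ℝ²` with its Euclidean structure. -/
abbrev E2 : Type := EuclideanSpace ℝ (Fin 2)

/-- `i`-th partial derivative of `f : ℝ² → ℝ`. -/
def pd (i : Fin 2) (f : E2 → ℝ) (x : E2) : ℝ :=
  fderiv ℝ f x (EuclideanSpace.single i 1)

/-- `|Du|²`, the squared norm of the gradient. -/
def gradSq (u : E2 → ℝ) (x : E2) : ℝ := ∑ i, (pd i u x) ^ 2

lemma pd_congr {f g : E2 → ℝ} {x : E2} (h : f =ᶠ[nhds x] g) (i : Fin 2) :
    pd i f x = pd i g x := by unfold pd; rw [h.fderiv_eq]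

lemma contDiffAt_pd {f : E2 → ℝ} {x : E2} (hf : ContDiffAt ℝ (⊤ : ℕ∞) f x) (i : Fin 2) :
    ContDiffAt ℝ (⊤ : ℕ∞) (pd i f) x := by
  have h1 : ContDiffAt ℝ (⊤ : ℕ∞) (fderiv ℝ f) x := hf.fderiv_right (by simp)
  exact h1.clm_apply contDiffAt_const

lemma pd_add {f g : E2 → ℝ} {x : E2} (hf : DifferentiableAt ℝ f x)
    (hg : DifferentiableAt ℝ g x) (i : Fin 2) :
    pd i (fun y => f y + g y) x = pd i f x + pd i g x := by
  unfold pd; rw [fderiv_fun_add hf hg]; rfl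

lemma pd_mul {f g : E2 → ℝ} {x : E2} (hf : DifferentiableAt ℝ f x)
    (hg : DifferentiableAt ℝ g x) (i : Fin 2) :
    pd i (fun y => f y * g y) x = pd i f x * g x + f x * pd i g x := by
  unfold pd; rw [fderiv_fun_mul hf hg]; simp; ring

lemma pd_sub {f g : E2 → ℝ} {x : E2} (hf : DifferentiableAt ℝ f x)
    (hg : DifferentiableAt ℝ g x) (i : Fin 2) :
    pd i (fun y => f y - g y) x = pd i f x - pd i g x := by
  unfold pd; rw [fderiv_fun_sub hf hg]; rfl

lemma pd_const {x : E2} (c : ℝ) (i : Fin 2) : pd i (fun _ => c) x = 0 := by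
  unfold pd; rw [fderiv_fun_const]; rfl

lemma pd_div_const {f : E2 → ℝ} {x : E2} (hf : DifferentiableAt ℝ f x) (c : ℝ) (i : Fin 2) :
    pd i (fun y => f y / c) x = pd i f x / c := by
  unfold pd
  simp only [div_eq_mul_inv]
  rw [fderiv_mul_const hf]
  simp [mul_comm]

lemma pd_pd {f : E2 → ℝ} {x : E2} (hf : ContDiffAt ℝ (⊤ : ℕ∞) f x) (i j : Fin 2) :
    pd i (pd j f) x
      = fderiv ℝ (fderiv ℝ f) x (EuclideanSpace.single i 1) (EuclideanSpace.single j 1) := by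
  unfold pd
  have hd : DifferentiableAt ℝ (fderiv ℝ f) x :=
    (hf.fderiv_right (m := (⊤ : ℕ∞)) (by simp)).differentiableAt (by simp)
  rw [fderiv_clm_apply hd (differentiableAt_const _)]
  simp

lemma pd_comm {f : E2 → ℝ} {x : E2} (hf : ContDiffAt ℝ (⊤ : ℕ∞) f x) (i j : Fin 2) :
    pd i (pd j f) x = pd j (pd i f) x := by
  rw [pd_pd hf, pd_pd hf]
  exact hf.isSymmSndFDerivAt ((by rw [minSmoothness_of_isRCLikeNormedField]; exact WithTop.coe_le_coe.mpr le_top)) _ _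

lemma pd_sq {f : E2 → ℝ} {x : E2} (hf : DifferentiableAt ℝ f x) (i : Fin 2) :
    pd i (fun y => f y ^ 2) x = 2 * f x * pd i f x := by
  have h : (fun y => f y ^ 2) = fun y => f y * f y := by funext y; ring
  rw [h, pd_mul hf hf]; ring

lemma pd_mul3 {f g h : E2 → ℝ} {x : E2} (hf : DifferentiableAt ℝ f x)
    (hg : DifferentiableAt ℝ g x) (hh : DifferentiableAt ℝ h x) (i : Fin 2) :
    pd i (fun y => f y * g y * h y) x
      = (pd i f x * g x + f x * pd i g x) * h x + f x * g x * pd i h x := by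
  rw [pd_mul (f := fun y => f y * g y) (hf.mul hg) hh, pd_mul hf hg]

lemma pd_half_gradSq {u : E2 → ℝ} {y : E2} (hy : ContDiffAt ℝ (⊤ : ℕ∞) u y) (j : Fin 2) :
    pd j (fun z => gradSq u z / 2) y
      = pd 0 u y * pd j (pd 0 u) y + pd 1 u y * pd j (pd 1 u) y := by
  have h0 : DifferentiableAt ℝ (pd 0 u) y :=
    (contDiffAt_pd hy 0).differentiableAt (by simp)
  have h1 : DifferentiableAt ℝ (pd 1 u) y :=
    (contDiffAt_pd hy 1).differentiableAt (by simp)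
  have hfun : (fun z => gradSq u z / 2) = fun z => (pd 0 u z ^ 2 + pd 1 u z ^ 2) / 2 := by
    funext z; simp [gradSq, Fin.sum_univ_two]
  rw [hfun, pd_div_const (f := fun z => pd 0 u z ^ 2 + pd 1 u z ^ 2) ((h0.pow 2).add (h1.pow 2)),
    pd_add (f := fun z => pd 0 u z ^ 2) (g := fun z => pd 1 u z ^ 2) (h0.pow 2) (h1.pow 2), pd_sq h0, pd_sq h1]
  ring

/-- `|D²u|²`, the squared Frobenius norm of the Hessian. -/
def hessSq (u : E2 → ℝ) (x : E2) : ℝ := ∑ i, ∑ j, (pd i (pd j u) x) ^ 2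

/-- The graphical translator equation
`(1+|Du|²)Δu − ∑ᵢⱼ Dᵢu Dⱼu DᵢDⱼu + (1+|Du|²) D₂u = 0`. -/
def TranslatorEq (u : E2 → ℝ) (x : E2) : Prop :=
  (1 + gradSq u x) * (∑ i, pd i (pd i u) x)
    - (∑ i, ∑ j, pd i u x * pd j u x * pd i (pd j u) x)
    + (1 + gradSq u x) * pd 1 u x = 0

/-- The coefficients `aⁱʲ = δⁱʲ − DᵢuDⱼu/(1+|Du|²)`. -/
def acoef (u : E2 → ℝ) (i j : Fin 2) (x : E2) : ℝ :=
  (if i = j then 1 else 0) - pd i u x * pd j u x / (1 + gradSq u x)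

/-- The linearized operator `L v = ∑ᵢⱼ aⁱʲ DᵢDⱼv + D₂v`. -/
def Lop (u v : E2 → ℝ) (x : E2) : ℝ :=
  (∑ i, ∑ j, acoef u i j x * pd i (pd j v) x) + pd 1 v x


lemma L_endgame (a b h00 h01 h11 : ℝ)
    (hEq : (1 + (a ^ 2 + b ^ 2)) * (h00 + h11) - (a * a * h00 + a * b * h01 + (b * a * h01 + b * b * h11))
      + (1 + (a ^ 2 + b ^ 2)) * b = 0) :
    ((1 + (a ^ 2 + b ^ 2)) * (h00 ^ 2 + h01 ^ 2 + (h01 ^ 2 + h11 ^ 2)) + ((a * h00 + b * h01) ^ 2 + (a * h01 + b * h11) ^ 2) - 2 * (a * a * h00 + a * b * h01 + (b * a * h01 + b * b * h11)) * (h00 + h11 + b)) / (1 + (a ^ 2 + b ^ 2))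
      ≥ (1 - 5 * (a ^ 2 + b ^ 2) / (1 + (a ^ 2 + b ^ 2))) * (h00 ^ 2 + h01 ^ 2 + (h01 ^ 2 + h11 ^ 2)) := by
  have hdpos : (0:ℝ) < (1 + (a ^ 2 + b ^ 2)) := by positivity
  have key : 2 * (a * a * h00 + a * b * h01 + (b * a * h01 + b * b * h11)) ^ 2 ≤ (1 + (a ^ 2 + b ^ 2)) * (((a * h00 + b * h01) ^ 2 + (a * h01 + b * h11) ^ 2) + 5 * (a ^ 2 + b ^ 2) * (h00 ^ 2 + h01 ^ 2 + (h01 ^ 2 + h11 ^ 2))) := by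
    have hCS1 : (a * (a * h00 + b * h01) + b * (a * h01 + b * h11)) ^ 2
        ≤ (a ^ 2 + b ^ 2) * ((a * h00 + b * h01) ^ 2 + (a * h01 + b * h11) ^ 2) := by
      nlinarith [sq_nonneg (a * (a * h01 + b * h11) - b * (a * h00 + b * h01))]
    have hCS2 : ((a * h00 + b * h01) ^ 2 + (a * h01 + b * h11) ^ 2) ≤ (a ^ 2 + b ^ 2) * (h00 ^ 2 + h01 ^ 2 + (h01 ^ 2 + h11 ^ 2)) := by
      nlinarith [sq_nonneg (a * h01 - b * h00), sq_nonneg (a * h11 - b * h01)]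
    nlinarith [hCS1, hCS2, sq_nonneg (a * h00 + b * h01), sq_nonneg (a * h01 + b * h11),
      sq_nonneg a, sq_nonneg b, sq_nonneg h00, sq_nonneg h01, sq_nonneg h11,
      mul_nonneg (mul_nonneg (sq_nonneg a) (sq_nonneg b)) (sq_nonneg h01)]
  have h2 : (1 + (a ^ 2 + b ^ 2)) * (2 * (a * a * h00 + a * b * h01 + (b * a * h01 + b * b * h11)) * (h00 + h11 + b)) = 2 * (a * a * h00 + a * b * h01 + (b * a * h01 + b * b * h11)) ^ 2 := by linear_combination (2 * (a * a * h00 + a * b * h01 + (b * a * h01 + b * b * h11))) * hEq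
  have h3 : 2 * (a * a * h00 + a * b * h01 + (b * a * h01 + b * b * h11)) * (h00 + h11 + b) ≤ ((a * h00 + b * h01) ^ 2 + (a * h01 + b * h11) ^ 2) + 5 * (a ^ 2 + b ^ 2) * (h00 ^ 2 + h01 ^ 2 + (h01 ^ 2 + h11 ^ 2)) :=
    le_of_mul_le_mul_left (by linarith) hdpos
  rw [ge_iff_le, ← sub_nonneg]
  have hid : ((1 + (a ^ 2 + b ^ 2)) * (h00 ^ 2 + h01 ^ 2 + (h01 ^ 2 + h11 ^ 2)) + ((a * h00 + b * h01) ^ 2 + (a * h01 + b * h11) ^ 2) - 2 * (a * a * h00 + a * b * h01 + (b * a * h01 + b * b * h11)) * (h00 + h11 + b)) / (1 + (a ^ 2 + b ^ 2))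
      - (1 - 5 * (a ^ 2 + b ^ 2) / (1 + (a ^ 2 + b ^ 2))) * (h00 ^ 2 + h01 ^ 2 + (h01 ^ 2 + h11 ^ 2))
      = (((a * h00 + b * h01) ^ 2 + (a * h01 + b * h11) ^ 2) + 5 * (a ^ 2 + b ^ 2) * (h00 ^ 2 + h01 ^ 2 + (h01 ^ 2 + h11 ^ 2)) - 2 * (a * a * h00 + a * b * h01 + (b * a * h01 + b * b * h11)) * (h00 + h11 + b)) / (1 + (a ^ 2 + b ^ 2)) := by
    field_simp
    ring
  rw [hid]
  exact div_nonneg (by linarith) (le_of_lt hdpos)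

set_option maxHeartbeats 2000000 in
set_option maxRecDepth 20000 in
/-- `L(|Du|²/2) ≥ (1 − 5|Du|²/(1+|Du|²))|D²u|²` for a graphical translator. -/
theorem L_gradSq (U : Set E2) (hU : IsOpen U) (u : E2 → ℝ)
    (hu : ContDiffOn ℝ (⊤ : ℕ∞) u U) (heq : ∀ x ∈ U, TranslatorEq u x) :
    ∀ x ∈ U, Lop u (fun y => gradSq u y / 2) x ≥
      (1 - 5 * gradSq u x / (1 + gradSq u x)) * hessSq u x := by
  intro x hx
  have cAt : ∀ y ∈ U, ContDiffAt ℝ (⊤ : ℕ∞) u y := fun y hy => hu.contDiffAt (hU.mem_nhds hy)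
  have c1 : ∀ (k : Fin 2), ∀ y ∈ U, ContDiffAt ℝ (⊤ : ℕ∞) (pd k u) y :=
    fun k y hy => contDiffAt_pd (cAt y hy) k
  have c2 : ∀ (j k : Fin 2), ∀ y ∈ U, ContDiffAt ℝ (⊤ : ℕ∞) (pd j (pd k u)) y :=
    fun j k y hy => contDiffAt_pd (c1 k y hy) j
  have dp : ∀ i : Fin 2, DifferentiableAt ℝ (pd i u) x :=
    fun i => (c1 i x hx).differentiableAt (by simp)
  have dpp : ∀ i j : Fin 2, DifferentiableAt ℝ (pd i (pd j u)) x :=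
    fun i j => (c2 i j x hx).differentiableAt (by simp)
  have hswap : pd 1 (pd 0 u) =ᶠ[nhds x] pd 0 (pd 1 u) := by
    filter_upwards [hU.mem_nhds hx] with y hy
    exact pd_comm (cAt y hy) 1 0
  have hs : pd 1 (pd 0 u) x = pd 0 (pd 1 u) x := pd_comm (cAt x hx) 1 0
  have hR1 : pd 0 (pd 1 (pd 0 u)) x = pd 0 (pd 0 (pd 1 u)) x := pd_congr hswap 0
  have hR4 : pd 1 (pd 1 (pd 0 u)) x = pd 1 (pd 0 (pd 1 u)) x := pd_congr hswap 1
  have hR3 : pd 1 (pd 0 (pd 1 u)) x = pd 0 (pd 1 (pd 1 u)) x := pd_comm (c1 1 x hx) 1 0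
  have hR2 : pd 1 (pd 0 (pd 0 u)) x = pd 0 (pd 0 (pd 1 u)) x := by
    rw [pd_comm (c1 0 x hx) 1 0]; exact hR1
  have hF : ∀ y ∈ U, (1 + (pd 0 u y ^ 2 + pd 1 u y ^ 2)) * (pd 0 (pd 0 u) y + pd 1 (pd 1 u) y) - (pd 0 u y * pd 0 u y * pd 0 (pd 0 u) y + pd 0 u y * pd 1 u y * pd 0 (pd 1 u) y + (pd 1 u y * pd 0 u y * pd 1 (pd 0 u) y + pd 1 u y * pd 1 u y * pd 1 (pd 1 u) y)) + (1 + (pd 0 u y ^ 2 + pd 1 u y ^ 2)) * pd 1 u y = 0 := by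
    intro y hy
    have h := heq y hy
    simp only [TranslatorEq, gradSq, Fin.sum_univ_two] at h
    linear_combination h
  have hFev : (fun y => (1 + (pd 0 u y ^ 2 + pd 1 u y ^ 2)) * (pd 0 (pd 0 u) y + pd 1 (pd 1 u) y) - (pd 0 u y * pd 0 u y * pd 0 (pd 0 u) y + pd 0 u y * pd 1 u y * pd 0 (pd 1 u) y + (pd 1 u y * pd 0 u y * pd 1 (pd 0 u) y + pd 1 u y * pd 1 u y * pd 1 (pd 1 u) y)) + (1 + (pd 0 u y ^ 2 + pd 1 u y ^ 2)) * pd 1 u y) =ᶠ[nhds x] (fun _ => (0:ℝ)) := by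
    filter_upwards [hU.mem_nhds hx] with y hy using hF y hy
  have hEk : ∀ k : Fin 2, (0 + (2 * pd 0 u x * pd k (pd 0 u) x + 2 * pd 1 u x * pd k (pd 1 u) x)) * (pd 0 (pd 0 u) x + pd 1 (pd 1 u) x) + (1 + (pd 0 u x ^ 2 + pd 1 u x ^ 2)) * (pd k (pd 0 (pd 0 u)) x + pd k (pd 1 (pd 1 u)) x) - (((pd k (pd 0 u) x * pd 0 u x + pd 0 u x * pd k (pd 0 u) x) * pd 0 (pd 0 u) x + pd 0 u x * pd 0 u x * pd k (pd 0 (pd 0 u)) x) + ((pd k (pd 0 u) x * pd 1 u x + pd 0 u x * pd k (pd 1 u) x) * pd 0 (pd 1 u) x + pd 0 u x * pd 1 u x * pd k (pd 0 (pd 1 u)) x) + (((pd k (pd 1 u) x * pd 0 u x + pd 1 u x * pd k (pd 0 u) x) * pd 1 (pd 0 u) x + pd 1 u x * pd 0 u x * pd k (pd 1 (pd 0 u)) x) + ((pd k (pd 1 u) x * pd 1 u x + pd 1 u x * pd k (pd 1 u) x) * pd 1 (pd 1 u) x + pd 1 u x * pd 1 u x * pd k (pd 1 (pd 1 u)) x)))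 + ((0 + (2 * pd 0 u x * pd k (pd 0 u) x + 2 * pd 1 u x * pd k (pd 1 u) x)) * pd 1 u x + (1 + (pd 0 u x ^ 2 + pd 1 u x ^ 2)) * pd k (pd 1 u) x) = 0 := by
    intro k
    have dsq : DifferentiableAt ℝ (fun y => pd 0 u y ^ 2 + pd 1 u y ^ 2) x :=
      ((dp 0).pow 2).add ((dp 1).pow 2)
    have dA : DifferentiableAt ℝ (fun y => 1 + (pd 0 u y ^ 2 + pd 1 u y ^ 2)) x := (differentiableAt_const 1).add dsq
    have dB : DifferentiableAt ℝ (fun y => pd 0 (pd 0 u) y + pd 1 (pd 1 u) y) x := (dpp 0 0).add (dpp 1 1)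
    have dc : ∀ i j : Fin 2, DifferentiableAt ℝ (fun y => pd i u y * pd j u y * pd i (pd j u) y) x :=
      fun i j => ((dp i).mul (dp j)).mul (dpp i j)
    have dC : DifferentiableAt ℝ (fun y => pd 0 u y * pd 0 u y * pd 0 (pd 0 u) y + pd 0 u y * pd 1 u y * pd 0 (pd 1 u) y + (pd 1 u y * pd 0 u y * pd 1 (pd 0 u) y + pd 1 u y * pd 1 u y * pd 1 (pd 1 u) y)) x := ((dc 0 0).add (dc 0 1)).add ((dc 1 0).add (dc 1 1))
    have h0 : pd k (fun y => (1 + (pd 0 u y ^ 2 + pd 1 u y ^ 2)) * (pd 0 (pd 0 u) y + pd 1 (pd 1 u) y) - (pd 0 u y * pd 0 u y * pd 0 (pd 0 u) y + pd 0 u y * pd 1 u y * pd 0 (pd 1 u) y + (pd 1 u y * pd 0 u y * pd 1 (pd 0 u) y + pd 1 u y * pd 1 u y * pd 1 (pd 1 u) y)) + (1 + (pd 0 u y ^ 2 + pd 1 u y ^ 2)) * pd 1 u y) x = 0 := by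
      rw [pd_congr hFev k]; exact pd_const 0 k
    have e1 : pd k (fun y => (1 + (pd 0 u y ^ 2 + pd 1 u y ^ 2)) * (pd 0 (pd 0 u) y + pd 1 (pd 1 u) y) - (pd 0 u y * pd 0 u y * pd 0 (pd 0 u) y + pd 0 u y * pd 1 u y * pd 0 (pd 1 u) y + (pd 1 u y * pd 0 u y * pd 1 (pd 0 u) y + pd 1 u y * pd 1 u y * pd 1 (pd 1 u) y)) + (1 + (pd 0 u y ^ 2 + pd 1 u y ^ 2)) * pd 1 u y) x
        = pd k (fun y => (1 + (pd 0 u y ^ 2 + pd 1 u y ^ 2)) * (pd 0 (pd 0 u) y + pd 1 (pd 1 u) y) - (pd 0 u y * pd 0 u y * pd 0 (pd 0 u) y + pd 0 u y * pd 1 u y * pd 0 (pd 1 u) y + (pd 1 u y * pd 0 u y * pd 1 (pd 0 u) y + pd 1 u y * pd 1 u y * pd 1 (pd 1 u) y))) x + pd k (fun y => (1 + (pd 0 u y ^ 2 + pd 1 u y ^ 2)) * pd 1 u y) x :=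
      pd_add ((dA.mul dB).sub dC) (dA.mul (dp 1)) k
    have e2 : pd k (fun y => (1 + (pd 0 u y ^ 2 + pd 1 u y ^ 2)) * (pd 0 (pd 0 u) y + pd 1 (pd 1 u) y) - (pd 0 u y * pd 0 u y * pd 0 (pd 0 u) y + pd 0 u y * pd 1 u y * pd 0 (pd 1 u) y + (pd 1 u y * pd 0 u y * pd 1 (pd 0 u) y + pd 1 u y * pd 1 u y * pd 1 (pd 1 u) y))) x
        = pd k (fun y => (1 + (pd 0 u y ^ 2 + pd 1 u y ^ 2)) * (pd 0 (pd 0 u) y + pd 1 (pd 1 u) y)) x - pd k (fun y => pd 0 u y * pd 0 u y * pd 0 (pd 0 u) y + pd 0 u y * pd 1 u y * pd 0 (pd 1 u) y + (pd 1 u y * pd 0 u y * pd 1 (pd 0 u) y + pd 1 u y * pd 1 u y * pd 1 (pd 1 u) y)) x :=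
      pd_sub (dA.mul dB) dC k
    have e3 : pd k (fun y => (1 + (pd 0 u y ^ 2 + pd 1 u y ^ 2)) * (pd 0 (pd 0 u) y + pd 1 (pd 1 u) y)) x
        = pd k (fun y => 1 + (pd 0 u y ^ 2 + pd 1 u y ^ 2)) x * (pd 0 (pd 0 u) x + pd 1 (pd 1 u) x) + (1 + (pd 0 u x ^ 2 + pd 1 u x ^ 2)) * pd k (fun y => pd 0 (pd 0 u) y + pd 1 (pd 1 u) y) x :=
      pd_mul dA dB k
    have e4 : pd k (fun y => (1 + (pd 0 u y ^ 2 + pd 1 u y ^ 2)) * pd 1 u y) x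
        = pd k (fun y => 1 + (pd 0 u y ^ 2 + pd 1 u y ^ 2)) x * pd 1 u x + (1 + (pd 0 u x ^ 2 + pd 1 u x ^ 2)) * pd k (pd 1 u) x :=
      pd_mul dA (dp 1) k
    have e5 : pd k (fun y => pd 0 u y * pd 0 u y * pd 0 (pd 0 u) y + pd 0 u y * pd 1 u y * pd 0 (pd 1 u) y + (pd 1 u y * pd 0 u y * pd 1 (pd 0 u) y + pd 1 u y * pd 1 u y * pd 1 (pd 1 u) y)) x
        = pd k (fun y => pd 0 u y * pd 0 u y * pd 0 (pd 0 u) y + pd 0 u y * pd 1 u y * pd 0 (pd 1 u) y) x + pd k (fun y => pd 1 u y * pd 0 u y * pd 1 (pd 0 u) y + pd 1 u y * pd 1 u y * pd 1 (pd 1 u) y) x :=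
      pd_add ((dc 0 0).add (dc 0 1)) ((dc 1 0).add (dc 1 1)) k
    have e5a : pd k (fun y => pd 0 u y * pd 0 u y * pd 0 (pd 0 u) y + pd 0 u y * pd 1 u y * pd 0 (pd 1 u) y) x
        = pd k (fun y => pd 0 u y * pd 0 u y * pd 0 (pd 0 u) y) x + pd k (fun y => pd 0 u y * pd 1 u y * pd 0 (pd 1 u) y) x := pd_add (dc 0 0) (dc 0 1) k
    have e5b : pd k (fun y => pd 1 u y * pd 0 u y * pd 1 (pd 0 u) y + pd 1 u y * pd 1 u y * pd 1 (pd 1 u) y) x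
        = pd k (fun y => pd 1 u y * pd 0 u y * pd 1 (pd 0 u) y) x + pd k (fun y => pd 1 u y * pd 1 u y * pd 1 (pd 1 u) y) x := pd_add (dc 1 0) (dc 1 1) k
    have e500 : pd k (fun y => pd 0 u y * pd 0 u y * pd 0 (pd 0 u) y) x = (pd k (pd 0 u) x * pd 0 u x + pd 0 u x * pd k (pd 0 u) x) * pd 0 (pd 0 u) x + pd 0 u x * pd 0 u x * pd k (pd 0 (pd 0 u)) x := pd_mul3 (dp 0) (dp 0) (dpp 0 0) k
    have e501 : pd k (fun y => pd 0 u y * pd 1 u y * pd 0 (pd 1 u) y) x = (pd k (pd 0 u) x * pd 1 u x + pd 0 u x * pd k (pd 1 u) x) * pd 0 (pd 1 u) x + pd 0 u x * pd 1 u x * pd k (pd 0 (pd 1 u)) x := pd_mul3 (dp 0) (dp 1) (dpp 0 1) k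
    have e510 : pd k (fun y => pd 1 u y * pd 0 u y * pd 1 (pd 0 u) y) x = (pd k (pd 1 u) x * pd 0 u x + pd 1 u x * pd k (pd 0 u) x) * pd 1 (pd 0 u) x + pd 1 u x * pd 0 u x * pd k (pd 1 (pd 0 u)) x := pd_mul3 (dp 1) (dp 0) (dpp 1 0) k
    have e511 : pd k (fun y => pd 1 u y * pd 1 u y * pd 1 (pd 1 u) y) x = (pd k (pd 1 u) x * pd 1 u x + pd 1 u x * pd k (pd 1 u) x) * pd 1 (pd 1 u) x + pd 1 u x * pd 1 u x * pd k (pd 1 (pd 1 u)) x := pd_mul3 (dp 1) (dp 1) (dpp 1 1) k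
    have e6 : pd k (fun y => 1 + (pd 0 u y ^ 2 + pd 1 u y ^ 2)) x
        = pd k (fun _ => (1:ℝ)) x + pd k (fun y => pd 0 u y ^ 2 + pd 1 u y ^ 2) x :=
      pd_add (differentiableAt_const 1) dsq k
    have e6a : pd k (fun _ => (1:ℝ)) x = 0 := pd_const 1 k
    have e6b : pd k (fun y => pd 0 u y ^ 2 + pd 1 u y ^ 2) x
        = pd k (fun y => pd 0 u y ^ 2) x + pd k (fun y => pd 1 u y ^ 2) x :=
      pd_add ((dp 0).pow 2) ((dp 1).pow 2) k
    have e6c : pd k (fun y => pd 0 u y ^ 2) x = 2 * pd 0 u x * pd k (pd 0 u) x := pd_sq (dp 0) k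
    have e6d : pd k (fun y => pd 1 u y ^ 2) x = 2 * pd 1 u x * pd k (pd 1 u) x := pd_sq (dp 1) k
    have e7 : pd k (fun y => pd 0 (pd 0 u) y + pd 1 (pd 1 u) y) x = pd k (pd 0 (pd 0 u)) x + pd k (pd 1 (pd 1 u)) x := pd_add (dpp 0 0) (dpp 1 1) k
    rw [e1, e2, e3, e4, e5, e5a, e5b, e500, e501, e510, e511, e6, e6a, e6b, e6c, e6d, e7] at h0
    linear_combination h0
  have hMev : ∀ j : Fin 2, pd j (fun y => gradSq u y / 2)
      =ᶠ[nhds x] fun y => pd 0 u y * pd j (pd 0 u) y + pd 1 u y * pd j (pd 1 u) y := by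
    intro j
    filter_upwards [hU.mem_nhds hx] with y hy using pd_half_gradSq (cAt y hy) j
  have hM : ∀ i j : Fin 2, pd i (pd j (fun y => gradSq u y / 2)) x
      = pd i (pd 0 u) x * pd j (pd 0 u) x + pd 0 u x * pd i (pd j (pd 0 u)) x
        + (pd i (pd 1 u) x * pd j (pd 1 u) x + pd 1 u x * pd i (pd j (pd 1 u)) x) := by
    intro i j
    have dj0 : DifferentiableAt ℝ (pd j (pd 0 u)) x := (contDiffAt_pd (c1 0 x hx) j).differentiableAt (by simp)
    have dj1 : DifferentiableAt ℝ (pd j (pd 1 u)) x := (contDiffAt_pd (c1 1 x hx) j).differentiableAt (by simp)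
    rw [pd_congr (hMev j) i,
      pd_add (f := fun y => pd 0 u y * pd j (pd 0 u) y) (g := fun y => pd 1 u y * pd j (pd 1 u) y) ((dp 0).mul dj0) ((dp 1).mul dj1) i,
      pd_mul (dp 0) dj0 i, pd_mul (dp 1) dj1 i]
  have hw1 : pd 1 (fun y => gradSq u y / 2) x
      = pd 0 u x * pd 1 (pd 0 u) x + pd 1 u x * pd 1 (pd 1 u) x := pd_half_gradSq (cAt x hx) 1
  have hE0 := hEk 0
  have hE1 := hEk 1
  rw [hR1, hs] at hE0
  rw [hR2, hR4, hR3, hs] at hE1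
  have hEq := hF x hx
  rw [hs] at hEq
  have hdpos : (0:ℝ) < (1 + (pd 0 u x ^ 2 + pd 1 u x ^ 2)) := by positivity
  have hne : ((1 + (pd 0 u x ^ 2 + pd 1 u x ^ 2)) : ℝ) ≠ 0 := ne_of_gt hdpos
  have if1 : (if (0:Fin 2) = 0 then (1:ℝ) else 0) = 1 := by simp
  have if2 : (if (0:Fin 2) = 1 then (1:ℝ) else 0) = 0 := by simp
  have if3 : (if (1:Fin 2) = 0 then (1:ℝ) else 0) = 0 := by simp
  have if4 : (if (1:Fin 2) = 1 then (1:ℝ) else 0) = 1 := by simp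
  have hL3 : (1 + (pd 0 u x ^ 2 + pd 1 u x ^ 2)) * Lop u (fun y => gradSq u y / 2) x
      = (1 + (pd 0 u x ^ 2 + pd 1 u x ^ 2)) * (pd 0 (pd 0 u) x ^ 2 + pd 0 (pd 1 u) x ^ 2 + (pd 0 (pd 1 u) x ^ 2 + pd 1 (pd 1 u) x ^ 2)) + ((pd 0 u x * pd 0 (pd 0 u) x + pd 1 u x * pd 0 (pd 1 u) x) ^ 2 + (pd 0 u x * pd 0 (pd 1 u) x + pd 1 u x * pd 1 (pd 1 u) x) ^ 2) - 2 * (pd 0 u x * pd 0 u x * pd 0 (pd 0 u) x + pd 0 u x * pd 1 u x * pd 0 (pd 1 u) x + (pd 1 u x * pd 0 u x * pd 0 (pd 1 u) x + pd 1 u x * pd 1 u x * pd 1 (pd 1 u) x)) * (pd 0 (pd 0 u) x + pd 1 (pd 1 u) x + pd 1 u x) := by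
    simp only [Lop, acoef, Fin.sum_univ_two]
    rw [hM 0 0, hM 0 1, hM 1 0, hM 1 1, hw1, hR1, hR2, hR4, hR3, hs]
    simp only [gradSq, Fin.sum_univ_two]
    simp only [if1, if2, if3, if4, ↓reduceIte]
    field_simp
    linear_combination (pd 0 u x) * hE0 + (pd 1 u x) * hE1
  have hGrad : gradSq u x = (pd 0 u x ^ 2 + pd 1 u x ^ 2) := by simp [gradSq, Fin.sum_univ_two]
  have hHess : hessSq u x = (pd 0 (pd 0 u) x ^ 2 + pd 0 (pd 1 u) x ^ 2 + (pd 0 (pd 1 u) x ^ 2 + pd 1 (pd 1 u) x ^ 2)) := by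
    simp only [hessSq, Fin.sum_univ_two]
    rw [hs]
  have hLopEq : Lop u (fun y => gradSq u y / 2) x
      = ((1 + (pd 0 u x ^ 2 + pd 1 u x ^ 2)) * (pd 0 (pd 0 u) x ^ 2 + pd 0 (pd 1 u) x ^ 2 + (pd 0 (pd 1 u) x ^ 2 + pd 1 (pd 1 u) x ^ 2)) + ((pd 0 u x * pd 0 (pd 0 u) x + pd 1 u x * pd 0 (pd 1 u) x) ^ 2 + (pd 0 u x * pd 0 (pd 1 u) x + pd 1 u x * pd 1 (pd 1 u) x) ^ 2) - 2 * (pd 0 u x * pd 0 u x * pd 0 (pd 0 u) x + pd 0 u x * pd 1 u x * pd 0 (pd 1 u) x + (pd 1 u x * pd 0 u x * pd 0 (pd 1 u) x + pd 1 u x * pd 1 u x * pd 1 (pd 1 u) x)) * (pd 0 (pd 0 u) x + pd 1 (pd 1 u) x + pd 1 u x)) / (1 + (pd 0 u x ^ 2 + pd 1 u x ^ 2)) := by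
    rw [eq_div_iff hne]; linear_combination hL3
  rw [hLopEq, hGrad, hHess]
  exact L_endgame (pd 0 u x) (pd 1 u x) (pd 0 (pd 0 u) x) (pd 0 (pd 1 u) x) (pd 1 (pd 1 u) x) hEq


end
end

section
/- Let $u$ be a smooth function on an open set of $\mathbb{R}^2$ containing the circle of radius $R > 0$ about the origin. Define $\gamma(\theta) = \big(u(R\cos\theta, R\sin\theta),\, R\cos\theta,\, R\sin\theta\big) \in \mathbb{R}^3$ and $\nu(x) = \frac{(1,\,-D_1u(x),\,-D_2u(x))}{\sqrt{1+|Du(x)|^2}}$. Then $\Big|\int_0^{2\pi} \big\langle \gamma'(\theta) \times \nu(R\cos\theta, R\sin\theta),\, e_3 \big\rangle\, d\theta\Big| \leq 4\pi R \sup_{|x| = R} |Du(x)|^2$, where $\times$ denotes the cross product in $\mathbb{R}^3$ and $e_3 = (0,0,1)$. -/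
open Metric Real Matrix

noncomputable section

lemma gradSq_eq (u : E2 → ℝ) (x : E2) :
    gradSq u x = (pd 0 u x) ^ 2 + (pd 1 u x) ^ 2 := by
  simp [gradSq, Fin.sum_univ_two]

/-- The circle parametrization, with the type pinned to `E2`. -/
def circ (R : ℝ) (t : ℝ) : E2 := !₂[R * Real.cos t, R * Real.sin t]

/-- Its derivative vector. -/
def circ' (R : ℝ) (t : ℝ) : E2 := !₂[-(R * Real.sin t), R * Real.cos t]

lemma e2_decomp (x : E2) :
    x = x 0 • EuclideanSpace.single 0 (1:ℝ) + x 1 • EuclideanSpace.single 1 (1:ℝ) := by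
  ext i
  fin_cases i <;>
    simp [EuclideanSpace.single_apply, PiLp.add_apply, PiLp.smul_apply]

lemma clm_apply_eq (L : E2 →L[ℝ] ℝ) (v : E2) :
    L v = v 0 * L (EuclideanSpace.single 0 (1:ℝ)) + v 1 * L (EuclideanSpace.single 1 (1:ℝ)) := by
  conv_lhs => rw [e2_decomp v]
  rw [map_add, L.map_smul, L.map_smul]
  simp [smul_eq_mul]

lemma circ_mem_sphere (R : ℝ) (hR : 0 ≤ R) (θ : ℝ) :
    circ R θ ∈ sphere (0 : E2) R := by
  have hn : ‖circ R θ‖ = R := by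
    rw [EuclideanSpace.norm_eq, Fin.sum_univ_two]
    have h0 : circ R θ 0 = R * Real.cos θ := rfl
    have h1 : circ R θ 1 = R * Real.sin θ := rfl
    rw [h0, h1]
    simp only [Real.norm_eq_abs, sq_abs]
    have : (R * Real.cos θ) ^ 2 + (R * Real.sin θ) ^ 2 = R ^ 2 := by
      have := Real.sin_sq_add_cos_sq θ
      nlinarith
    rw [this, Real.sqrt_sq hR]
  exact mem_sphere_zero_iff_norm.mpr hn

lemma circ_hasDerivAt (R θ : ℝ) : HasDerivAt (circ R) (circ' R θ) θ := by
  have h1 : HasDerivAt (fun t : ℝ => (![R * Real.cos t, R * Real.sin t] : Fin 2 → ℝ))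
      (![-(R * Real.sin θ), R * Real.cos θ] : Fin 2 → ℝ) θ := by
    rw [hasDerivAt_pi]
    intro i
    fin_cases i
    · simpa [mul_comm] using (Real.hasDerivAt_cos θ).const_mul R
    · simpa [mul_comm] using (Real.hasDerivAt_sin θ).const_mul R
  exact (EuclideanSpace.equiv (Fin 2) ℝ).symm.hasFDerivAt.comp_hasDerivAt θ h1

lemma circ_continuous (R : ℝ) : Continuous (circ R) := by
  have h1 : Continuous (fun t : ℝ => (![R * Real.cos t, R * Real.sin t] : Fin 2 → ℝ)) := by
    refine continuous_pi fun i => ?_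
    fin_cases i <;> simp <;> fun_prop
  exact (EuclideanSpace.equiv (Fin 2) ℝ).symm.continuous.comp h1

/-- The flux of `e₃ᵀ` across the curve in the graph of `u` over the circle of radius `R`
is bounded by `4πR · sup_{|x|=R} |Du|²`:  here `γ(θ) = (u(R cos θ, R sin θ), R cos θ, R sin θ)`
and `ν = (1, −D₁u, −D₂u)/√(1+|Du|²)`. -/
theorem flux_bound (R : ℝ) (hR : 0 < R) (U : Set E2) (hU : IsOpen U)
    (hsub : sphere (0 : E2) R ⊆ U) (u : E2 → ℝ) (hu : ContDiffOn ℝ (⊤ : ℕ∞) u U) :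
    |∫ θ in (0:ℝ)..(2 * Real.pi),
        (crossProduct
          (deriv (fun t : ℝ => (![u !₂[R * Real.cos t, R * Real.sin t],
              R * Real.cos t, R * Real.sin t] : Fin 3 → ℝ)) θ)
          ((Real.sqrt (1 + gradSq u !₂[R * Real.cos θ, R * Real.sin θ]))⁻¹ •
            ![1, -pd 0 u !₂[R * Real.cos θ, R * Real.sin θ],
                -pd 1 u !₂[R * Real.cos θ, R * Real.sin θ]])) 2|
      ≤ 4 * Real.pi * R * ⨆ x ∈ sphere (0 : E2) R, gradSq u x := by
  have hmemS : ∀ t : ℝ, circ R t ∈ sphere (0 : E2) R := circ_mem_sphere R hR.le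
  have hmemU : ∀ t : ℝ, circ R t ∈ U := fun t => hsub (hmemS t)
  -- differentiability of u
  have hudiff : ∀ t : ℝ, HasFDerivAt u (fderiv ℝ u (circ R t)) (circ R t) := fun t =>
    ((hu.differentiableOn (by simp)).differentiableAt (hU.mem_nhds (hmemU t))).hasFDerivAt
  -- the derivative of the curve γ
  have hγ : ∀ θ : ℝ,
      HasDerivAt (fun t : ℝ => (![u !₂[R * Real.cos t, R * Real.sin t],
          R * Real.cos t, R * Real.sin t] : Fin 3 → ℝ))
        (![fderiv ℝ u (circ R θ) (circ' R θ), -(R * Real.sin θ), R * Real.cos θ] : Fin 3 → ℝ)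
        θ := by
    intro θ
    rw [hasDerivAt_pi]
    intro i
    fin_cases i
    · have h := (hudiff θ).comp_hasDerivAt θ (circ_hasDerivAt R θ)
      simpa [circ, Function.comp_def] using h
    · simpa [mul_comm] using (Real.hasDerivAt_cos θ).const_mul R
    · simpa [mul_comm] using (Real.hasDerivAt_sin θ).const_mul R
  -- the explicit integrand
  set F : ℝ → ℝ := fun θ =>
    (Real.sqrt (1 + gradSq u (circ R θ)))⁻¹ *
      (R * Real.sin θ * (1 + (pd 0 u (circ R θ)) ^ 2)
        - R * Real.cos θ * (pd 0 u (circ R θ) * pd 1 u (circ R θ))) with hFdef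
  have hFeq : ∀ θ : ℝ,
      (crossProduct
          (deriv (fun t : ℝ => (![u !₂[R * Real.cos t, R * Real.sin t],
              R * Real.cos t, R * Real.sin t] : Fin 3 → ℝ)) θ)
          ((Real.sqrt (1 + gradSq u !₂[R * Real.cos θ, R * Real.sin θ]))⁻¹ •
            ![1, -pd 0 u !₂[R * Real.cos θ, R * Real.sin θ],
                -pd 1 u !₂[R * Real.cos θ, R * Real.sin θ]])) 2 = F θ := by
    intro θ
    rw [(hγ θ).deriv]
    have hd : fderiv ℝ u (circ R θ) (circ' R θ) =
        -(R * Real.sin θ) * pd 0 u (circ R θ) + R * Real.cos θ * pd 1 u (circ R θ) := by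
      rw [clm_apply_eq]
      have h0 : circ' R θ 0 = -(R * Real.sin θ) := rfl
      have h1 : circ' R θ 1 = R * Real.cos θ := rfl
      rw [h0, h1]
      rfl
    simp only [cross_apply, Matrix.cons_val_zero, Matrix.cons_val_one, Matrix.head_cons,
      Matrix.cons_val_two, Matrix.tail_cons, Pi.smul_apply, smul_eq_mul, hd, hFdef]
    show _ = (Real.sqrt (1 + gradSq u (circ R θ)))⁻¹ * _
    simp only [circ]
    ring
  -- continuity facts
  have hfd_cont : ContinuousOn (fderiv ℝ u) U := hu.continuousOn_fderiv_of_isOpen hU (by simp)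
  have hpd_contU : ∀ i : Fin 2, ContinuousOn (pd i u) U := fun i =>
    hfd_cont.clm_apply continuousOn_const
  have hgcontU : ContinuousOn (gradSq u) U := by
    have : ContinuousOn (fun x : E2 => (pd 0 u x) ^ 2 + (pd 1 u x) ^ 2) U :=
      ((hpd_contU 0).pow 2).add ((hpd_contU 1).pow 2)
    exact this.congr fun x _ => gradSq_eq u x
  have hLcont : Continuous (fun θ : ℝ => fderiv ℝ u (circ R θ)) :=
    hfd_cont.comp_continuous (circ_continuous R) hmemU
  have hpcont : ∀ i : Fin 2, Continuous (fun θ : ℝ => pd i u (circ R θ)) := fun i =>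
    hLcont.clm_apply continuous_const
  have hgcont : Continuous (fun θ : ℝ => gradSq u (circ R θ)) :=
    hgcontU.comp_continuous (circ_continuous R) hmemU
  -- bounds on the sup M
  set M := ⨆ x ∈ sphere (0 : E2) R, gradSq u x with hMdef
  obtain ⟨C, hC⟩ : BddAbove (gradSq u '' sphere (0 : E2) R) :=
    (isCompact_sphere (0 : E2) R).bddAbove_image (hgcontU.mono hsub)
  have hbnd : ∀ x ∈ sphere (0 : E2) R, gradSq u x ≤ max C 0 := fun x hx =>
    le_trans (hC ⟨x, hx, rfl⟩) (le_max_left _ _)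
  have hgbdd : BddAbove (Set.range fun x : E2 => ⨆ _ : x ∈ sphere (0 : E2) R, gradSq u x) := by
    refine ⟨max C 0, ?_⟩
    rintro y ⟨x, rfl⟩
    dsimp only
    by_cases hx : x ∈ sphere (0 : E2) R
    · rw [ciSup_pos hx]; exact hbnd x hx
    · haveI : IsEmpty (x ∈ sphere (0 : E2) R) := ⟨hx⟩
      rw [Real.iSup_of_isEmpty]
      exact le_max_right _ _
  have hMx : ∀ x ∈ sphere (0 : E2) R, gradSq u x ≤ M := by
    intro x hx
    have h1 : gradSq u x = ⨆ _ : x ∈ sphere (0 : E2) R, gradSq u x :=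
      (ciSup_pos (f := fun _ => gradSq u x) hx).symm
    rw [hMdef, h1]
    exact le_ciSup hgbdd x
  have hM0 : 0 ≤ M := by
    obtain ⟨x, hx⟩ := (NormedSpace.sphere_nonempty (E := E2) (x := 0) (r := R)).mpr hR.le
    refine le_trans ?_ (hMx x hx)
    rw [gradSq_eq]; positivity
  -- the pointwise bound
  have key : ∀ θ : ℝ, |F θ - R * Real.sin θ| ≤ 2 * R * M := by
    intro θ
    set P := pd 0 u (circ R θ) with hP
    set Q := pd 1 u (circ R θ) with hQ
    have hG : gradSq u (circ R θ) = P ^ 2 + Q ^ 2 := gradSq_eq u _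
    have hGM : P ^ 2 + Q ^ 2 ≤ M := hG ▸ hMx _ (hmemS θ)
    set s := Real.sqrt (1 + gradSq u (circ R θ)) with hsdef
    have hg0 : 0 ≤ gradSq u (circ R θ) := by rw [gradSq_eq]; positivity
    have hs1 : 1 ≤ s := by
      rw [hsdef]
      have h := Real.sqrt_le_sqrt (show (1:ℝ) ≤ 1 + gradSq u (circ R θ) by linarith)
      simpa using h
    have hs0 : 0 < s := lt_of_lt_of_le one_pos hs1
    have hs2 : s ^ 2 = 1 + P ^ 2 + Q ^ 2 := by
      rw [hsdef, Real.sq_sqrt (by nlinarith [sq_nonneg P, sq_nonneg Q]), hG]; ring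
    have heq : F θ - R * Real.sin θ =
        R * Real.sin θ * ((1 + P ^ 2 - s) / s) - R * Real.cos θ * ((P * Q) / s) := by
      rw [hFdef]
      dsimp only
      rw [← hP, ← hQ, ← hsdef]
      field_simp
      ring
    have h1 : |1 + P ^ 2 - s| ≤ M := by
      rw [abs_le]
      constructor
      · nlinarith [sq_nonneg Q]
      · nlinarith [sq_nonneg Q]
    have h2 : |P * Q| ≤ M := by
      rw [abs_le]
      constructor
      · nlinarith [sq_nonneg (P + Q)]
      · nlinarith [sq_nonneg (P - Q)]
    have ht1 : |R * Real.sin θ * ((1 + P ^ 2 - s) / s)| ≤ R * M := by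
      rw [abs_mul]
      refine mul_le_mul ?_ ?_ (abs_nonneg _) hR.le
      · rw [abs_mul, abs_of_pos hR]
        calc R * |Real.sin θ| ≤ R * 1 :=
              mul_le_mul_of_nonneg_left (Real.abs_sin_le_one θ) hR.le
          _ = R := mul_one R
      · rw [abs_div, abs_of_pos hs0]
        exact le_trans (div_le_self (abs_nonneg _) hs1) h1
    have ht2 : |R * Real.cos θ * ((P * Q) / s)| ≤ R * M := by
      rw [abs_mul]
      refine mul_le_mul ?_ ?_ (abs_nonneg _) hR.le
      · rw [abs_mul, abs_of_pos hR]
        calc R * |Real.cos θ| ≤ R * 1 :=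
              mul_le_mul_of_nonneg_left (Real.abs_cos_le_one θ) hR.le
          _ = R := mul_one R
      · rw [abs_div, abs_of_pos hs0]
        exact le_trans (div_le_self (abs_nonneg _) hs1) h2
    calc |F θ - R * Real.sin θ|
        = |R * Real.sin θ * ((1 + P ^ 2 - s) / s) - R * Real.cos θ * ((P * Q) / s)| := by
          rw [heq]
      _ ≤ |R * Real.sin θ * ((1 + P ^ 2 - s) / s)| + |R * Real.cos θ * ((P * Q) / s)| :=
          abs_sub _ _
      _ ≤ R * M + R * M := add_le_add ht1 ht2
      _ = 2 * R * M := by ring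
  -- continuity of F
  have hs_cont : Continuous (fun θ : ℝ => Real.sqrt (1 + gradSq u (circ R θ))) :=
    Real.continuous_sqrt.comp (continuous_const.add hgcont)
  have hs_ne : ∀ θ : ℝ, Real.sqrt (1 + gradSq u (circ R θ)) ≠ 0 := by
    intro θ
    have h0 : 0 ≤ gradSq u (circ R θ) := by rw [gradSq_eq]; positivity
    positivity
  have hFcont : Continuous F := by
    rw [hFdef]
    refine Continuous.mul (Continuous.inv₀ hs_cont hs_ne) ?_
    have h0 := hpcont 0
    have h1 := hpcont 1
    fun_prop
  -- conclusion
  have hrw : (∫ θ in (0:ℝ)..(2 * Real.pi),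
        (crossProduct
          (deriv (fun t : ℝ => (![u !₂[R * Real.cos t, R * Real.sin t],
              R * Real.cos t, R * Real.sin t] : Fin 3 → ℝ)) θ)
          ((Real.sqrt (1 + gradSq u !₂[R * Real.cos θ, R * Real.sin θ]))⁻¹ •
            ![1, -pd 0 u !₂[R * Real.cos θ, R * Real.sin θ],
                -pd 1 u !₂[R * Real.cos θ, R * Real.sin θ]])) 2)
      = ∫ θ in (0:ℝ)..(2 * Real.pi), F θ :=
    intervalIntegral.integral_congr fun θ _ => hFeq θ
  rw [hrw]
  have hsin_int : IntervalIntegrable (fun θ : ℝ => R * Real.sin θ)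
      MeasureTheory.volume 0 (2 * Real.pi) := (by fun_prop : Continuous _).intervalIntegrable _ _
  have hsplit : (∫ θ in (0:ℝ)..(2 * Real.pi), F θ)
      = ∫ θ in (0:ℝ)..(2 * Real.pi), (F θ - R * Real.sin θ) := by
    rw [intervalIntegral.integral_sub (hFcont.intervalIntegrable _ _) hsin_int]
    have h0 : (∫ θ in (0:ℝ)..(2 * Real.pi), R * Real.sin θ) = 0 := by
      rw [intervalIntegral.integral_const_mul, integral_sin]
      simp
    rw [h0, sub_zero]
  rw [hsplit]
  have hb := intervalIntegral.norm_integral_le_of_norm_le_const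
    (C := 2 * R * M) (f := fun θ => F θ - R * Real.sin θ) (a := 0) (b := 2 * Real.pi)
    (fun x _ => by simpa [Real.norm_eq_abs] using key x)
  rw [Real.norm_eq_abs] at hb
  calc |∫ θ in (0:ℝ)..(2 * Real.pi), (F θ - R * Real.sin θ)|
      ≤ 2 * R * M * |2 * Real.pi - 0| := hb
    _ = 4 * Real.pi * R * M := by
        rw [sub_zero, abs_of_pos (by positivity)]
        ring

end
end

section
/- Let $u$ be a smooth function on an open neighborhood of the closed ball $\overline{B_R(0)} \subset \mathbb{R}^2$ satisfying the graphical translator equation, and write $W = \sqrt{1+|Du|^2}$. Then $\int_{B_R(0)} \frac{(D_2u)^2}{W}\,dx = \int_{\partial B_R(0)} \Big( W\,n_2 - \frac{(Du \cdot n)\,D_2u}{W} \Big)\,ds$, where $n = (n_1, n_2)$ is the outward unit normal to the circle $\partial B_R(0)$ and $ds$ is arclength measure. -/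
open Metric Real
open MeasureTheory Set

noncomputable section

namespace FluxAux

abbrev e0 : E2 := EuclideanSpace.single 0 1
abbrev e1 : E2 := EuclideanSpace.single 1 1

lemma vec_decomp (v : E2) : v = v 0 • e0 + v 1 • e1 := by
  ext i
  fin_cases i <;>
    simp [e0, e1, EuclideanSpace.single_apply, PiLp.add_apply, PiLp.smul_apply]

lemma gradSq_two (u : E2 → ℝ) (x : E2) :
    gradSq u x = pd 0 u x ^ 2 + pd 1 u x ^ 2 := by
  simp [gradSq, Fin.sum_univ_two]

lemma one_add_gradSq_pos (u : E2 → ℝ) (x : E2) : 0 < 1 + gradSq u x := by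
  rw [gradSq_two]; positivity

def Wf (u : E2 → ℝ) (x : E2) : ℝ := Real.sqrt (1 + gradSq u x)

lemma Wf_pos (u : E2 → ℝ) (x : E2) : 0 < Wf u x :=
  Real.sqrt_pos.2 (one_add_gradSq_pos u x)

lemma Wf_sq (u : E2 → ℝ) (x : E2) : Wf u x ^ 2 = 1 + gradSq u x :=
  Real.sq_sqrt (one_add_gradSq_pos u x).le

def Pf (u : E2 → ℝ) (x : E2) : ℝ := -(pd 0 u x * pd 1 u x) / Wf u x

def Qf (u : E2 → ℝ) (x : E2) : ℝ := (1 + (pd 0 u x) ^ 2) / Wf u x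

variable {V : Set E2}

lemma diffAt (hV : IsOpen V) {f : E2 → ℝ} (hf : ContDiffOn ℝ (⊤ : ℕ∞) f V) {x : E2} (hx : x ∈ V) :
    DifferentiableAt ℝ f x :=
  (hf.contDiffAt (hV.mem_nhds hx)).differentiableAt (by simp)

lemma pd_contDiffOn (hV : IsOpen V) {f : E2 → ℝ} (hf : ContDiffOn ℝ (⊤ : ℕ∞) f V) (i : Fin 2) :
    ContDiffOn ℝ (⊤ : ℕ∞) (pd i f) V := by
  have h1 : ContDiffOn ℝ (⊤ : ℕ∞) (fderiv ℝ f) V :=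
    hf.fderiv_of_isOpen hV (by exact_mod_cast le_top)
  exact h1.clm_apply contDiffOn_const

lemma fderiv_apply_eq {f : E2 → ℝ} {x : E2} (hf : DifferentiableAt ℝ f x) (v : E2) :
    fderiv ℝ f x v = v 0 * pd 0 f x + v 1 * pd 1 f x := by
  conv_lhs => rw [vec_decomp v]
  rw [map_add, (fderiv ℝ f x).map_smul, (fderiv ℝ f x).map_smul]
  simp [pd, smul_eq_mul]

lemma hasDerivAt_comp_pd {f : E2 → ℝ} {x : E2} (hf : DifferentiableAt ℝ f x)
    {γ : ℝ → E2} {v : E2} {t : ℝ} (hγ : HasDerivAt γ v t) (hxt : γ t = x) :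
    HasDerivAt (fun s => f (γ s)) (v 0 * pd 0 f x + v 1 * pd 1 f x) t := by
  have h := (hxt ▸ hf.hasFDerivAt).comp_hasDerivAt t hγ
  rw [hxt, fderiv_apply_eq hf] at h
  exact h


end FluxAux

namespace FluxAux

lemma one_add_gradSq_funext (u : E2 → ℝ) :
    (fun x => 1 + gradSq u x) = fun x => 1 + (pd 0 u x ^ 2 + pd 1 u x ^ 2) :=
  funext fun x => by rw [gradSq_two]

variable {V : Set E2} {u : E2 → ℝ}

lemma contDiffOn_W (hV : IsOpen V) (hu : ContDiffOn ℝ (⊤ : ℕ∞) u V) :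
    ContDiffOn ℝ (⊤ : ℕ∞) (Wf u) V := by
  have h : ContDiffOn ℝ (⊤ : ℕ∞) (fun x => 1 + gradSq u x) V := by
    rw [one_add_gradSq_funext]
    exact contDiffOn_const.add (((pd_contDiffOn hV hu 0).pow 2).add
      ((pd_contDiffOn hV hu 1).pow 2))
  exact h.sqrt fun x _ => (one_add_gradSq_pos u x).ne'

lemma contDiffOn_P (hV : IsOpen V) (hu : ContDiffOn ℝ (⊤ : ℕ∞) u V) :
    ContDiffOn ℝ (⊤ : ℕ∞) (Pf u) V :=
  (((pd_contDiffOn hV hu 0).mul (pd_contDiffOn hV hu 1)).neg).div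
    (contDiffOn_W hV hu) fun x _ => (Wf_pos u x).ne'

lemma contDiffOn_Q (hV : IsOpen V) (hu : ContDiffOn ℝ (⊤ : ℕ∞) u V) :
    ContDiffOn ℝ (⊤ : ℕ∞) (Qf u) V :=
  (contDiffOn_const.add ((pd_contDiffOn hV hu 0).pow 2)).div
    (contDiffOn_W hV hu) fun x _ => (Wf_pos u x).ne'

/-- Chain rule for `W ∘ γ`. -/
lemma hasDerivAt_W (hV : IsOpen V) (hu : ContDiffOn ℝ (⊤ : ℕ∞) u V) {x : E2} (hx : x ∈ V)
    {γ : ℝ → E2} {v : E2} {t : ℝ} (hγ : HasDerivAt γ v t) (hxt : γ t = x)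
    {A0 A1 : ℝ}
    (hA0 : A0 = v 0 * pd 0 (pd 0 u) x + v 1 * pd 1 (pd 0 u) x)
    (hA1 : A1 = v 0 * pd 0 (pd 1 u) x + v 1 * pd 1 (pd 1 u) x) :
    HasDerivAt (fun s => Wf u (γ s))
      ((pd 0 u x * A0 + pd 1 u x * A1) / Wf u x) t := by
  subst hxt hA0 hA1
  have hp : HasDerivAt (fun s => pd 0 u (γ s)) _ t :=
    hasDerivAt_comp_pd (diffAt hV (pd_contDiffOn hV hu 0) hx) hγ rfl
  have hq : HasDerivAt (fun s => pd 1 u (γ s)) _ t :=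
    hasDerivAt_comp_pd (diffAt hV (pd_contDiffOn hV hu 1) hx) hγ rfl
  have hS : HasDerivAt (fun s => 1 + gradSq u (γ s))
      (2 * pd 0 u (γ t) * (v 0 * pd 0 (pd 0 u) (γ t) + v 1 * pd 1 (pd 0 u) (γ t))
        + 2 * pd 1 u (γ t) * (v 0 * pd 0 (pd 1 u) (γ t) + v 1 * pd 1 (pd 1 u) (γ t))) t := by
    have heq : (fun s => 1 + gradSq u (γ s))
        = fun s => 1 + ((pd 0 u (γ s)) ^ 2 + (pd 1 u (γ s)) ^ 2) :=
      funext fun s => by rw [gradSq_two]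
    rw [heq]
    have h2 := ((hp.pow 2).add (hq.pow 2)).const_add 1
    refine h2.congr_deriv ?_
    push_cast
    ring
  have hsq := Real.hasDerivAt_sqrt (one_add_gradSq_pos u (γ t)).ne'
  have hcomp := hsq.comp t hS
  have : HasDerivAt (fun s => Wf u (γ s))
      (1 / (2 * Real.sqrt (1 + gradSq u (γ t)))
        * (2 * pd 0 u (γ t) * (v 0 * pd 0 (pd 0 u) (γ t) + v 1 * pd 1 (pd 0 u) (γ t))
          + 2 * pd 1 u (γ t) * (v 0 * pd 0 (pd 1 u) (γ t) + v 1 * pd 1 (pd 1 u) (γ t)))) t :=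
    hcomp
  convert this using 1
  have hW := (Wf_pos u (γ t)).ne'
  simp only [Wf] at hW ⊢
  field_simp

/-- Chain rule for `P ∘ γ`. -/
lemma hasDerivAt_P (hV : IsOpen V) (hu : ContDiffOn ℝ (⊤ : ℕ∞) u V) {x : E2} (hx : x ∈ V)
    {γ : ℝ → E2} {v : E2} {t : ℝ} (hγ : HasDerivAt γ v t) (hxt : γ t = x)
    {A0 A1 : ℝ}
    (hA0 : A0 = v 0 * pd 0 (pd 0 u) x + v 1 * pd 1 (pd 0 u) x)
    (hA1 : A1 = v 0 * pd 0 (pd 1 u) x + v 1 * pd 1 (pd 1 u) x) :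
    HasDerivAt (fun s => Pf u (γ s))
      (-(A0 * pd 1 u x + pd 0 u x * A1) / Wf u x
        + pd 0 u x * pd 1 u x * (pd 0 u x * A0 + pd 1 u x * A1) / Wf u x ^ 3) t := by
  subst hxt
  have hp : HasDerivAt (fun s => pd 0 u (γ s)) _ t :=
    hasDerivAt_comp_pd (diffAt hV (pd_contDiffOn hV hu 0) hx) hγ rfl
  have hq : HasDerivAt (fun s => pd 1 u (γ s)) _ t :=
    hasDerivAt_comp_pd (diffAt hV (pd_contDiffOn hV hu 1) hx) hγ rfl
  have hW := hasDerivAt_W hV hu hx hγ rfl hA0 hA1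
  have hdiv := ((hp.mul hq).neg).div hW (Wf_pos u (γ t)).ne'
  have : HasDerivAt (fun s => Pf u (γ s)) _ t := hdiv
  convert this using 1
  simp only [Pi.neg_apply, Pi.mul_apply, Pi.pow_apply]
  subst hA0 hA1
  have hWpos := Wf_pos u (γ t)
  field_simp
  ring

/-- Chain rule for `Q ∘ γ`. -/
lemma hasDerivAt_Q (hV : IsOpen V) (hu : ContDiffOn ℝ (⊤ : ℕ∞) u V) {x : E2} (hx : x ∈ V)
    {γ : ℝ → E2} {v : E2} {t : ℝ} (hγ : HasDerivAt γ v t) (hxt : γ t = x)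
    {A0 A1 : ℝ}
    (hA0 : A0 = v 0 * pd 0 (pd 0 u) x + v 1 * pd 1 (pd 0 u) x)
    (hA1 : A1 = v 0 * pd 0 (pd 1 u) x + v 1 * pd 1 (pd 1 u) x) :
    HasDerivAt (fun s => Qf u (γ s))
      (2 * pd 0 u x * A0 / Wf u x
        - (1 + pd 0 u x ^ 2) * (pd 0 u x * A0 + pd 1 u x * A1) / Wf u x ^ 3) t := by
  subst hxt
  have hp : HasDerivAt (fun s => pd 0 u (γ s)) _ t :=
    hasDerivAt_comp_pd (diffAt hV (pd_contDiffOn hV hu 0) hx) hγ rfl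
  have hW := hasDerivAt_W hV hu hx hγ rfl hA0 hA1
  have hdiv := ((hp.pow 2).const_add 1).div hW (Wf_pos u (γ t)).ne'
  have : HasDerivAt (fun s => Qf u (γ s)) _ t := hdiv
  convert this using 1
  simp only [Pi.neg_apply, Pi.mul_apply, Pi.pow_apply]
  subst hA0 hA1
  have hWpos := Wf_pos u (γ t)
  field_simp
  ring

end FluxAux

namespace FluxAux

variable {V : Set E2} {u : E2 → ℝ}

lemma hasDerivAt_line (x : E2) (w : E2) : HasDerivAt (fun s : ℝ => x + s • w) w 0 := by
  simpa using (((hasDerivAt_id (0:ℝ)).smul_const w).const_add x)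

lemma pd_unique {f : E2 → ℝ} {x : E2} (hf : DifferentiableAt ℝ f x) {i : Fin 2} {d : ℝ}
    (h : HasDerivAt (fun s : ℝ => f (x + s • (EuclideanSpace.single i (1:ℝ)))) d 0) :
    pd i f x = d := by
  have hγ := hasDerivAt_line x (EuclideanSpace.single i (1:ℝ))
  have h2 : HasDerivAt (fun s : ℝ => f (x + s • (EuclideanSpace.single i (1:ℝ))))
      (fderiv ℝ f x (EuclideanSpace.single i (1:ℝ))) 0 := by
    have hx0 : x + (0:ℝ) • (EuclideanSpace.single i (1:ℝ)) = x := by simp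
    have := (hx0 ▸ hf.hasFDerivAt).comp_hasDerivAt 0 hγ
    simpa [hx0, Function.comp_def] using this
  exact h2.unique h

lemma pd_symm (hV : IsOpen V) (hu : ContDiffOn ℝ (⊤ : ℕ∞) u V) {x : E2} (hx : x ∈ V) :
    pd 0 (pd 1 u) x = pd 1 (pd 0 u) x := by
  have hF : DifferentiableAt ℝ (fderiv ℝ u) x :=
    (((hu.fderiv_of_isOpen hV (m := ((⊤ : ℕ∞) : WithTop ℕ∞)) (by exact_mod_cast le_top)).contDiffAt
      (hV.mem_nhds hx)).differentiableAt (by simp))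
  have h1 : ∀ᶠ y in nhds x, HasFDerivAt u (fderiv ℝ u y) y := by
    filter_upwards [hV.mem_nhds hx] with y hy
    exact (diffAt hV hu hy).hasFDerivAt
  have hsymm := second_derivative_symmetric_of_eventually h1 hF.hasFDerivAt
  have key : ∀ i j : Fin 2, pd i (pd j u) x
      = (fderiv ℝ (fderiv ℝ u) x (EuclideanSpace.single i (1:ℝ)))
          (EuclideanSpace.single j (1:ℝ)) := by
    intro i j
    have hclm : fderiv ℝ (fun y => (fderiv ℝ u y) (EuclideanSpace.single j (1:ℝ))) x
        = ((fderiv ℝ (fderiv ℝ u) x).flip (EuclideanSpace.single j (1:ℝ))) := by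
      have := fderiv_clm_apply (c := fderiv ℝ u)
        (u := fun _ : E2 => EuclideanSpace.single j (1:ℝ)) hF (differentiableAt_const _)
      simpa using this
    show (fderiv ℝ (fun y => (fderiv ℝ u y) (EuclideanSpace.single j (1:ℝ))) x)
        (EuclideanSpace.single i (1:ℝ)) = _
    rw [hclm]
    rfl
  rw [key 0 1, key 1 0, hsymm]

lemma translator_scalar {x : E2} (ht : TranslatorEq u x) :
    Wf u x ^ 2 * (pd 0 (pd 0 u) x + pd 1 (pd 1 u) x)
      - (pd 0 u x * pd 0 u x * pd 0 (pd 0 u) x + pd 0 u x * pd 1 u x * pd 0 (pd 1 u) x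
        + pd 1 u x * pd 0 u x * pd 1 (pd 0 u) x + pd 1 u x * pd 1 u x * pd 1 (pd 1 u) x)
      + Wf u x ^ 2 * pd 1 u x = 0 := by
  have h := ht
  rw [TranslatorEq] at h
  rw [Wf_sq]
  simp only [Fin.sum_univ_two] at h
  linarith

lemma e0_c0 : (e0 : E2) 0 = 1 := by simp [e0, EuclideanSpace.single_apply]
lemma e0_c1 : (e0 : E2) 1 = 0 := by simp [e0, EuclideanSpace.single_apply]
lemma e1_c0 : (e1 : E2) 0 = 0 := by simp [e1, EuclideanSpace.single_apply]
lemma e1_c1 : (e1 : E2) 1 = 1 := by simp [e1, EuclideanSpace.single_apply]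

/-- The divergence identity: `div (P,Q) = (D₂u)²/W` at points where the PDE holds. -/
lemma div_eq (hV : IsOpen V) (hu : ContDiffOn ℝ (⊤ : ℕ∞) u V) {x : E2} (hx : x ∈ V)
    (ht : TranslatorEq u x) :
    pd 0 (Pf u) x + pd 1 (Qf u) x = (pd 1 u x) ^ 2 / Wf u x := by
  have hP0 : pd 0 (Pf u) x
      = -(pd 0 (pd 0 u) x * pd 1 u x + pd 0 u x * pd 0 (pd 1 u) x) / Wf u x
        + pd 0 u x * pd 1 u x
          * (pd 0 u x * pd 0 (pd 0 u) x + pd 1 u x * pd 0 (pd 1 u) x) / Wf u x ^ 3 := by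
    refine pd_unique (diffAt hV (contDiffOn_P hV hu) hx) ?_
    exact hasDerivAt_P hV hu hx (hasDerivAt_line x e0) (by simp)
      (by rw [e0_c0, e0_c1]; ring) (by rw [e0_c0, e0_c1]; ring)
  have hQ1 : pd 1 (Qf u) x
      = 2 * pd 0 u x * pd 1 (pd 0 u) x / Wf u x
        - (1 + pd 0 u x ^ 2)
          * (pd 0 u x * pd 1 (pd 0 u) x + pd 1 u x * pd 1 (pd 1 u) x) / Wf u x ^ 3 := by
    refine pd_unique (diffAt hV (contDiffOn_Q hV hu) hx) ?_
    exact hasDerivAt_Q hV hu hx (hasDerivAt_line x e1) (by simp)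
      (by rw [e1_c0, e1_c1]; ring) (by rw [e1_c0, e1_c1]; ring)
  have hsym := pd_symm hV hu hx
  have hT := translator_scalar ht
  have hW2 : Wf u x ^ 2 = 1 + (pd 0 u x ^ 2 + pd 1 u x ^ 2) := by
    rw [Wf_sq, gradSq_two]
  have hWpos := Wf_pos u x
  rw [hP0, hQ1, hsym]
  rw [hsym] at hT
  field_simp
  linear_combination (-(pd 1 u x)) * hT
    + (pd 0 u x * pd 1 (pd 0 u) x + pd 1 u x * pd 1 (pd 1 u) x) * hW2

end FluxAux


namespace FluxAux

variable {V : Set E2} {u : E2 → ℝ}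

lemma pd0_P_eq (hV : IsOpen V) (hu : ContDiffOn ℝ (⊤ : ℕ∞) u V) {x : E2} (hx : x ∈ V) :
    pd 0 (Pf u) x
      = -(pd 0 (pd 0 u) x * pd 1 u x + pd 0 u x * pd 0 (pd 1 u) x) / Wf u x
        + pd 0 u x * pd 1 u x
          * (pd 0 u x * pd 0 (pd 0 u) x + pd 1 u x * pd 0 (pd 1 u) x) / Wf u x ^ 3 := by
  refine pd_unique (diffAt hV (contDiffOn_P hV hu) hx) ?_
  exact hasDerivAt_P hV hu hx (hasDerivAt_line x e0) (by simp)
    (by rw [e0_c0, e0_c1]; ring) (by rw [e0_c0, e0_c1]; ring)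

lemma pd1_Q_eq (hV : IsOpen V) (hu : ContDiffOn ℝ (⊤ : ℕ∞) u V) {x : E2} (hx : x ∈ V) :
    pd 1 (Qf u) x
      = 2 * pd 0 u x * pd 1 (pd 0 u) x / Wf u x
        - (1 + pd 0 u x ^ 2)
          * (pd 0 u x * pd 1 (pd 0 u) x + pd 1 u x * pd 1 (pd 1 u) x) / Wf u x ^ 3 := by
  refine pd_unique (diffAt hV (contDiffOn_Q hV hu) hx) ?_
  exact hasDerivAt_Q hV hu hx (hasDerivAt_line x e1) (by simp)
    (by rw [e1_c0, e1_c1]; ring) (by rw [e1_c0, e1_c1]; ring)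

/-! ### Polar coordinates vector field -/

def Φm (z : ℝ × ℝ) : E2 := !₂[z.1 * Real.cos z.2, z.1 * Real.sin z.2]

def G1 (u : E2 → ℝ) (z : ℝ × ℝ) : ℝ :=
  z.1 * (Pf u (Φm z) * Real.cos z.2 + Qf u (Φm z) * Real.sin z.2)

def G2 (u : E2 → ℝ) (z : ℝ × ℝ) : ℝ :=
  Qf u (Φm z) * Real.cos z.2 - Pf u (Φm z) * Real.sin z.2

lemma comp_c0 (c s : ℝ) : ((c • e0 + s • e1 : E2)) 0 = c := by
  simp [e0, e1, EuclideanSpace.single_apply, PiLp.add_apply, PiLp.smul_apply]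

lemma comp_c1 (c s : ℝ) : ((c • e0 + s • e1 : E2)) 1 = s := by
  simp [e0, e1, EuclideanSpace.single_apply, PiLp.add_apply, PiLp.smul_apply]

lemma Φm_rep : Φm = fun z : ℝ × ℝ => (z.1 * Real.cos z.2) • e0 + (z.1 * Real.sin z.2) • e1 := by
  funext z
  ext i
  fin_cases i <;>
    simp [Φm, e0, e1, EuclideanSpace.single_apply, PiLp.add_apply, PiLp.smul_apply]

lemma Φm_differentiable : Differentiable ℝ Φm := by
  rw [Φm_rep]
  exact ((differentiable_fst.mul (Real.differentiable_cos.comp differentiable_snd)).smul_const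
    e0).add ((differentiable_fst.mul (Real.differentiable_sin.comp differentiable_snd)).smul_const e1)

lemma Φm_continuous : Continuous Φm := Φm_differentiable.continuous

lemma hasDerivAt_Φm_r (r θ : ℝ) :
    HasDerivAt (fun t => Φm (t, θ)) (Real.cos θ • e0 + Real.sin θ • e1) r := by
  have : (fun t => Φm (t, θ)) = fun t => (t * Real.cos θ) • e0 + (t * Real.sin θ) • e1 := by
    rw [Φm_rep]
  rw [this]
  have h := (((hasDerivAt_id r).mul_const (Real.cos θ)).smul_const (e0 : E2)).add
    (((hasDerivAt_id r).mul_const (Real.sin θ)).smul_const (e1 : E2))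
  simpa [Pi.add_def] using h

lemma hasDerivAt_Φm_θ (r θ : ℝ) :
    HasDerivAt (fun t => Φm (r, t)) ((-(r * Real.sin θ)) • e0 + (r * Real.cos θ) • e1) θ := by
  have : (fun t => Φm (r, t)) = fun t => (r * Real.cos t) • e0 + (r * Real.sin t) • e1 := by
    rw [Φm_rep]
  rw [this]
  have h := (((Real.hasDerivAt_cos θ).const_mul r).smul_const (e0 : E2)).add
    (((Real.hasDerivAt_sin θ).const_mul r).smul_const (e1 : E2))
  simpa [Pi.add_def, mul_neg] using h

lemma diffAt_PΦ (hV : IsOpen V) (hu : ContDiffOn ℝ (⊤ : ℕ∞) u V) {z : ℝ × ℝ} (hz : Φm z ∈ V) :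
    DifferentiableAt ℝ (fun w => Pf u (Φm w)) z :=
  (diffAt hV (contDiffOn_P hV hu) hz).comp z (Φm_differentiable z)

lemma diffAt_QΦ (hV : IsOpen V) (hu : ContDiffOn ℝ (⊤ : ℕ∞) u V) {z : ℝ × ℝ} (hz : Φm z ∈ V) :
    DifferentiableAt ℝ (fun w => Qf u (Φm w)) z :=
  (diffAt hV (contDiffOn_Q hV hu) hz).comp z (Φm_differentiable z)

lemma diffAt_G1 (hV : IsOpen V) (hu : ContDiffOn ℝ (⊤ : ℕ∞) u V) {z : ℝ × ℝ} (hz : Φm z ∈ V) :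
    DifferentiableAt ℝ (G1 u) z := by
  refine differentiableAt_fst.mul (((diffAt_PΦ hV hu hz).mul ?_).add
    ((diffAt_QΦ hV hu hz).mul ?_))
  · exact (Real.differentiable_cos.comp differentiable_snd).differentiableAt
  · exact (Real.differentiable_sin.comp differentiable_snd).differentiableAt

lemma diffAt_G2 (hV : IsOpen V) (hu : ContDiffOn ℝ (⊤ : ℕ∞) u V) {z : ℝ × ℝ} (hz : Φm z ∈ V) :
    DifferentiableAt ℝ (G2 u) z := by
  refine ((diffAt_QΦ hV hu hz).mul ?_).sub ((diffAt_PΦ hV hu hz).mul ?_)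
  · exact (Real.differentiable_cos.comp differentiable_snd).differentiableAt
  · exact (Real.differentiable_sin.comp differentiable_snd).differentiableAt

/-- The key pointwise divergence computation in polar coordinates. -/
lemma div_polar (hV : IsOpen V) (hu : ContDiffOn ℝ (⊤ : ℕ∞) u V) {z : ℝ × ℝ} (hz : Φm z ∈ V) :
    fderiv ℝ (G1 u) z (1, 0) + fderiv ℝ (G2 u) z (0, 1)
      = z.1 * (pd 0 (Pf u) (Φm z) + pd 1 (Qf u) (Φm z)) := by
  obtain ⟨r, θ⟩ := z
  set x := Φm (r, θ) with hxdef
  set c := Real.cos θ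
  set s := Real.sin θ
  -- r-partial of G1
  have hPr := hasDerivAt_P hV hu hz (hasDerivAt_Φm_r r θ) rfl
    (A0 := c * pd 0 (pd 0 u) x + s * pd 1 (pd 0 u) x)
    (A1 := c * pd 0 (pd 1 u) x + s * pd 1 (pd 1 u) x)
    (by rw [comp_c0, comp_c1]) (by rw [comp_c0, comp_c1])
  have hQr := hasDerivAt_Q hV hu hz (hasDerivAt_Φm_r r θ) rfl
    (A0 := c * pd 0 (pd 0 u) x + s * pd 1 (pd 0 u) x)
    (A1 := c * pd 0 (pd 1 u) x + s * pd 1 (pd 1 u) x)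
    (by rw [comp_c0, comp_c1]) (by rw [comp_c0, comp_c1])
  have hG1r : HasDerivAt (fun t => G1 u (t, θ)) _ r :=
    (hasDerivAt_id r).mul ((hPr.mul_const c).add (hQr.mul_const s))
  -- θ-partial of G2
  have hPθ := hasDerivAt_P hV hu hz (hasDerivAt_Φm_θ r θ) rfl
    (A0 := (-(r * s)) * pd 0 (pd 0 u) x + (r * c) * pd 1 (pd 0 u) x)
    (A1 := (-(r * s)) * pd 0 (pd 1 u) x + (r * c) * pd 1 (pd 1 u) x)
    (by rw [comp_c0, comp_c1]) (by rw [comp_c0, comp_c1])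
  have hQθ := hasDerivAt_Q hV hu hz (hasDerivAt_Φm_θ r θ) rfl
    (A0 := (-(r * s)) * pd 0 (pd 0 u) x + (r * c) * pd 1 (pd 0 u) x)
    (A1 := (-(r * s)) * pd 0 (pd 1 u) x + (r * c) * pd 1 (pd 1 u) x)
    (by rw [comp_c0, comp_c1]) (by rw [comp_c0, comp_c1])
  have hG2θ : HasDerivAt (fun t => G2 u (r, t)) _ θ :=
    (hQθ.mul (Real.hasDerivAt_cos θ)).sub (hPθ.mul (Real.hasDerivAt_sin θ))
  -- identify with fderiv evaluations
  have hline1 : HasDerivAt (fun t : ℝ => ((t, θ) : ℝ × ℝ)) (1, 0) r :=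
    (hasDerivAt_id r).prodMk (hasDerivAt_const r θ)
  have hline2 : HasDerivAt (fun t : ℝ => ((r, t) : ℝ × ℝ)) (0, 1) θ :=
    (hasDerivAt_const θ r).prodMk (hasDerivAt_id θ)
  have hv1 : fderiv ℝ (G1 u) (r, θ) (1, 0) = _ :=
    ((((diffAt_G1 hV hu hz).hasFDerivAt).comp_hasDerivAt r hline1 :
      HasDerivAt (G1 u ∘ fun t : ℝ => ((t, θ) : ℝ × ℝ)) _ r).unique hG1r)
  have hv2 : fderiv ℝ (G2 u) (r, θ) (0, 1) = _ :=
    ((((diffAt_G2 hV hu hz).hasFDerivAt).comp_hasDerivAt θ hline2 :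
      HasDerivAt (G2 u ∘ fun t : ℝ => ((r, t) : ℝ × ℝ)) _ θ).unique hG2θ)
  rw [hv1, hv2]
  rw [pd0_P_eq hV hu hz, pd1_Q_eq hV hu hz]
  have hsin2 : Real.sin θ ^ 2 = 1 - Real.cos θ ^ 2 := by
    have := Real.sin_sq_add_cos_sq θ; linarith
  have hWpos := Wf_pos u x
  simp only [c, s, id]
  field_simp
  ring_nf
  simp only [hsin2]
  ring

end FluxAux


namespace FluxAux

open MeasureTheory

variable {V : Set E2} {u : E2 → ℝ}

def mE : E2 ≃ᵐ ℝ × ℝ :=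
  (MeasurableEquiv.toLp 2 (Fin 2 → ℝ)).symm.trans MeasurableEquiv.finTwoArrow

lemma mE_symm_apply (y : ℝ × ℝ) : mE.symm y = (!₂[y.1, y.2] : E2) := by
  ext i
  fin_cases i <;> rfl

lemma mE_measurePreserving : MeasurePreserving mE :=
  (volume_preserving_finTwoArrow ℝ).comp
    (EuclideanSpace.volume_preserving_symm_measurableEquiv_toLp (Fin 2))

lemma norm_Φm (z : ℝ × ℝ) : ‖Φm z‖ = |z.1| := by
  rw [show Φm z = (!₂[z.1 * Real.cos z.2, z.1 * Real.sin z.2] : E2) from rfl]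
  rw [EuclideanSpace.norm_eq]
  simp only [Fin.sum_univ_two]
  rw [show (![z.1 * Real.cos z.2, z.1 * Real.sin z.2] : Fin 2 → ℝ) 0 = z.1 * Real.cos z.2 from rfl,
    show (![z.1 * Real.cos z.2, z.1 * Real.sin z.2] : Fin 2 → ℝ) 1 = z.1 * Real.sin z.2 from rfl]
  rw [show ‖z.1 * Real.cos z.2‖ ^ 2 + ‖z.1 * Real.sin z.2‖ ^ 2
      = z.1 ^ 2 * (Real.cos z.2 ^ 2 + Real.sin z.2 ^ 2) by
    simp [Real.norm_eq_abs, mul_pow, sq_abs]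
    nlinarith [Real.sin_sq_add_cos_sq z.2]]
  rw [Real.cos_sq_add_sin_sq, mul_one, Real.sqrt_sq_eq_abs]

lemma mem_ball_iff_sq {R : ℝ} (hR : 0 < R) (x : E2) :
    x ∈ Metric.ball (0 : E2) R ↔ (x 0) ^ 2 + (x 1) ^ 2 < R ^ 2 := by
  rw [Metric.mem_ball, dist_zero_right, EuclideanSpace.norm_eq]
  simp only [Fin.sum_univ_two, Real.norm_eq_abs, sq_abs]
  exact Real.sqrt_lt' hR

end FluxAux

open FluxAux




/-- The total mean curvature flux identity in graphical form:
`∫_{B_R} (D₂u)²/W dx = ∫_{∂B_R} (W n₂ − (Du·n) D₂u / W) ds`, `W = √(1+|Du|²)`.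
The boundary circle is parametrized by `θ ↦ (R cos θ, R sin θ)`, so that the outward unit
normal is `n = (cos θ, sin θ)` and the arclength element is `ds = R dθ`. -/
theorem flux_identity (R : ℝ) (hR : 0 < R) (V : Set E2) (hV : IsOpen V)
    (hsub : closedBall (0 : E2) R ⊆ V) (u : E2 → ℝ)
    (hu : ContDiffOn ℝ (⊤ : ℕ∞) u V) (heq : ∀ x ∈ V, TranslatorEq u x) :
    ∫ x in ball (0 : E2) R, (pd 1 u x) ^ 2 / Real.sqrt (1 + gradSq u x)
      = ∫ θ in (0:ℝ)..(2 * Real.pi),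
          (Real.sqrt (1 + gradSq u !₂[R * Real.cos θ, R * Real.sin θ]) * Real.sin θ
            - (pd 0 u !₂[R * Real.cos θ, R * Real.sin θ] * Real.cos θ
                + pd 1 u !₂[R * Real.cos θ, R * Real.sin θ] * Real.sin θ)
                * pd 1 u !₂[R * Real.cos θ, R * Real.sin θ]
                / Real.sqrt (1 + gradSq u !₂[R * Real.cos θ, R * Real.sin θ])) * R := by
  classical
  have hπ := Real.pi_pos
  set a : ℝ × ℝ := (0, -π) with ha
  set b : ℝ × ℝ := (R, π) with hb
  set hdv : E2 → ℝ := fun x => pd 0 (Pf u) x + pd 1 (Qf u) x with hdvdef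
  -- every point of the rectangle maps into V
  have hIccV : ∀ z ∈ Set.Icc a b, Φm z ∈ V := by
    intro z hz
    apply hsub
    rw [Metric.mem_closedBall, dist_zero_right, norm_Φm]
    have h1 : (0:ℝ) ≤ z.1 := hz.1.1
    have h2 : z.1 ≤ R := hz.2.1
    rw [abs_of_nonneg h1]; exact h2
  have hle : a ≤ b := by
    rw [ha, hb]; exact ⟨hR.le, show -π ≤ π by linarith⟩
  have hIoosub : Set.Ioo a.1 b.1 ×ˢ Set.Ioo a.2 b.2 ⊆ Set.Icc a b := by
    rw [Set.Icc_prod_eq]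
    exact Set.prod_mono Set.Ioo_subset_Icc_self Set.Ioo_subset_Icc_self
  -- divergence theorem hypotheses
  have Hc1 : ContinuousOn (G1 u) (Set.Icc a b) := fun z hz =>
    ((diffAt_G1 hV hu (hIccV z hz)).continuousAt).continuousWithinAt
  have Hc2 : ContinuousOn (G2 u) (Set.Icc a b) := fun z hz =>
    ((diffAt_G2 hV hu (hIccV z hz)).continuousAt).continuousWithinAt
  have Hd1 : ∀ z ∈ Set.Ioo a.1 b.1 ×ˢ Set.Ioo a.2 b.2 \ (∅ : Set (ℝ × ℝ)),
      HasFDerivAt (G1 u) (fderiv ℝ (G1 u) z) z := fun z hz =>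
    (diffAt_G1 hV hu (hIccV z (hIoosub hz.1))).hasFDerivAt
  have Hd2 : ∀ z ∈ Set.Ioo a.1 b.1 ×ˢ Set.Ioo a.2 b.2 \ (∅ : Set (ℝ × ℝ)),
      HasFDerivAt (G2 u) (fderiv ℝ (G2 u) z) z := fun z hz =>
    (diffAt_G2 hV hu (hIccV z (hIoosub hz.1))).hasFDerivAt
  have hdvcont : ContinuousOn hdv V :=
    ((pd_contDiffOn hV (contDiffOn_P hV hu) 0).continuousOn).add
      ((pd_contDiffOn hV (contDiffOn_Q hV hu) 1).continuousOn)
  have hdcont : ContinuousOn (fun z : ℝ × ℝ => z.1 * hdv (Φm z)) (Set.Icc a b) := by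
    refine continuousOn_fst.mul ?_
    exact hdvcont.comp Φm_continuous.continuousOn hIccV
  have Hi : IntegrableOn (fun z : ℝ × ℝ => fderiv ℝ (G1 u) z (1, 0) + fderiv ℝ (G2 u) z (0, 1))
      (Set.Icc a b) := by
    refine (hdcont.integrableOn_compact isCompact_Icc).congr_fun ?_ measurableSet_Icc
    intro z hz
    exact (div_polar hV hu (hIccV z hz)).symm
  have hdivthm := integral_divergence_prod_Icc_of_hasFDerivAt_off_countable_of_le
    (G1 u) (G2 u) (fun z => fderiv ℝ (G1 u) z) (fun z => fderiv ℝ (G2 u) z) a b hle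
    ∅ Set.countable_empty Hc1 Hc2 Hd1 Hd2 Hi
  -- boundary simplification
  have hbd : ∫ z in Set.Icc a b, (fderiv ℝ (G1 u) z (1, 0) + fderiv ℝ (G2 u) z (0, 1))
      = ∫ y in (-π)..π, G1 u (R, y) := by
    rw [hdivthm]
    have h1 : ∀ x : ℝ, G2 u (x, b.2) = G2 u (x, a.2) := by
      intro x
      show G2 u (x, π) = G2 u (x, -π)
      simp [G2, Φm, Real.cos_pi, Real.sin_pi, Real.cos_neg, Real.sin_neg]
    have h2 : ∀ y : ℝ, G1 u (a.1, y) = 0 := by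
      intro y; show G1 u (0, y) = 0; simp [G1]
    rw [intervalIntegral.integral_congr (g := fun x => G2 u (x, a.2)) (fun x _ => h1 x)]
    rw [intervalIntegral.integral_congr (g := fun _ => (0:ℝ)) (fun y _ => h2 y)]
    simp [ha, hb]
  -- the disc maps to the rectangle via polar coordinates
  set D : Set (ℝ × ℝ) := {y : ℝ × ℝ | y.1 ^ 2 + y.2 ^ 2 < R ^ 2} with hD
  have hDopen : IsOpen D := isOpen_lt (by fun_prop) continuous_const
  have hDpre : mE ⁻¹' D = ball (0 : E2) R := by
    ext x
    rw [Set.mem_preimage, mem_ball_iff_sq hR]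
    rfl
  have stepA : ∫ x in ball (0 : E2) R, (pd 1 u x) ^ 2 / Real.sqrt (1 + gradSq u x)
      = ∫ x in ball (0 : E2) R, hdv x := by
    refine setIntegral_congr_fun measurableSet_ball fun x hx => ?_
    have hxV : x ∈ V := hsub (ball_subset_closedBall hx)
    exact (div_eq hV hu hxV (heq x hxV)).symm
  have stepB : ∫ x in ball (0 : E2) R, hdv x = ∫ y in D, hdv (mE.symm y) := by
    have h := mE_measurePreserving.setIntegral_preimage_emb
      mE.measurableEmbedding (fun y => hdv (mE.symm y)) D
    rw [hDpre] at h
    simpa using h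
  have stepC : ∫ y in D, hdv (mE.symm y)
      = ∫ y, D.indicator (fun y => hdv (mE.symm y)) y :=
    (integral_indicator hDopen.measurableSet).symm
  have stepD : ∫ y, D.indicator (fun y => hdv (mE.symm y)) y
      = ∫ p in polarCoord.target, p.1 • D.indicator (fun y => hdv (mE.symm y)) (polarCoord.symm p) :=
    (integral_comp_polarCoord_symm _).symm
  have stepE : ∫ p in polarCoord.target,
        p.1 • D.indicator (fun y => hdv (mE.symm y)) (polarCoord.symm p)
      = ∫ p in polarCoord.target,
          (Set.Ioo (0:ℝ) R ×ˢ Set.Ioo (-π) π).indicator (fun p : ℝ × ℝ => p.1 * hdv (Φm p)) p := by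
    refine setIntegral_congr_fun polarCoord.open_target.measurableSet fun p hp => ?_
    rw [polarCoord_target] at hp
    obtain ⟨hp1, hp2⟩ := hp
    have hp1' : (0:ℝ) < p.1 := hp1
    have hsymm : polarCoord.symm p = (p.1 * Real.cos p.2, p.1 * Real.sin p.2) :=
      polarCoord_symm_apply p
    have hmem : polarCoord.symm p ∈ D ↔ p.1 < R := by
      rw [hsymm, hD]
      simp only [Set.mem_setOf_eq]
      have hcs := Real.sin_sq_add_cos_sq p.2
      have hval : (p.1 * Real.cos p.2) ^ 2 + (p.1 * Real.sin p.2) ^ 2 = p.1 ^ 2 := by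
        linear_combination p.1 ^ 2 * hcs
      rw [hval]
      constructor
      · intro h
        exact lt_of_pow_lt_pow_left₀ 2 hR.le h
      · intro h
        exact pow_lt_pow_left₀ h hp1'.le (by norm_num)
    have hΦ : mE.symm (polarCoord.symm p) = Φm p := by
      rw [hsymm, mE_symm_apply]; rfl
    by_cases hlt : p.1 < R
    · rw [Set.indicator_of_mem (hmem.2 hlt),
        Set.indicator_of_mem (Set.mem_prod.2 ⟨Set.mem_Ioo.2 ⟨hp1', hlt⟩, hp2⟩), hΦ]
      rfl
    · rw [Set.indicator_of_notMem (fun h => hlt (hmem.1 h)),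
        Set.indicator_of_notMem (fun h => hlt (Set.mem_prod.1 h).1.2), smul_zero]
  have stepF : ∫ p in polarCoord.target,
        (Set.Ioo (0:ℝ) R ×ˢ Set.Ioo (-π) π).indicator (fun p : ℝ × ℝ => p.1 * hdv (Φm p)) p
      = ∫ p in Set.Ioo (0:ℝ) R ×ˢ Set.Ioo (-π) π, p.1 * hdv (Φm p) := by
    rw [setIntegral_indicator ((isOpen_Ioo.prod isOpen_Ioo).measurableSet)]
    have hTS : polarCoord.target ∩ (Set.Ioo (0:ℝ) R ×ˢ Set.Ioo (-π) π)
        = Set.Ioo (0:ℝ) R ×ˢ Set.Ioo (-π) π := by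
      rw [polarCoord_target]
      exact Set.inter_eq_self_of_subset_right
        (Set.prod_mono Set.Ioo_subset_Ioi_self subset_rfl)
    rw [hTS]
  have stepG : ∫ p in Set.Ioo (0:ℝ) R ×ˢ Set.Ioo (-π) π, p.1 * hdv (Φm p)
      = ∫ p in Set.Icc a b, p.1 * hdv (Φm p) := by
    apply setIntegral_congr_set
    have hsub2 : Set.Ioo (0:ℝ) R ×ˢ Set.Ioo (-π) π ⊆ Set.Icc a b := hIoosub
    have hnull : volume (Set.Icc a b \ Set.Ioo (0:ℝ) R ×ˢ Set.Ioo (-π) π) = 0 := by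
      have hcover : Set.Icc a b \ Set.Ioo (0:ℝ) R ×ˢ Set.Ioo (-π) π
          ⊆ ({0, R} ×ˢ Set.Icc (-π) π) ∪ (Set.Icc (0:ℝ) R ×ˢ ({-π, π} : Set ℝ)) := by
        rintro z ⟨hz1, hz2⟩
        rw [Set.Icc_prod_eq] at hz1
        obtain ⟨⟨hz11, hz12⟩, hz21, hz22⟩ := hz1
        rw [Set.mem_prod] at hz2
        push_neg at hz2
        by_cases hzin : z.1 ∈ Set.Ioo (0:ℝ) R
        · right
          have := hz2 hzin
          rw [Set.mem_Ioo] at this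
          push_neg at this
          refine Set.mem_prod.2 ⟨⟨hz11, hz12⟩, ?_⟩
          rcases le_or_gt z.2 (-π) with h | h
          · left; linarith [le_antisymm h hz21]
          · right; exact le_antisymm hz22 (this h)
        · left
          rw [Set.mem_Ioo] at hzin
          push_neg at hzin
          refine Set.mem_prod.2 ⟨?_, ⟨hz21, hz22⟩⟩
          rcases le_or_gt z.1 0 with h | h
          · left; exact le_antisymm h hz11
          · right; exact le_antisymm hz12 (hzin h)
      refine measure_mono_null hcover (measure_union_null ?_ ?_)
      · have h0 : volume ({0, R} : Set ℝ) = 0 :=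
          ((Set.finite_singleton _).insert _).measure_zero _
        rw [Measure.volume_eq_prod, Measure.prod_prod, h0, zero_mul]
      · have h0 : volume ({-π, π} : Set ℝ) = 0 :=
          ((Set.finite_singleton _).insert _).measure_zero _
        rw [Measure.volume_eq_prod, Measure.prod_prod, h0, mul_zero]
    refine MeasureTheory.ae_eq_set.2 ⟨?_, hnull⟩
    rw [Set.diff_eq_empty.2 hsub2]
    exact measure_empty
  have stepH : ∫ p in Set.Icc a b, p.1 * hdv (Φm p)
      = ∫ z in Set.Icc a b, (fderiv ℝ (G1 u) z (1, 0) + fderiv ℝ (G2 u) z (0, 1)) :=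
    setIntegral_congr_fun measurableSet_Icc fun z hz => (div_polar hV hu (hIccV z hz)).symm
  -- boundary integrand identification
  have hGF : ∀ θ : ℝ, G1 u (R, θ)
      = (Real.sqrt (1 + gradSq u !₂[R * Real.cos θ, R * Real.sin θ]) * Real.sin θ
          - (pd 0 u !₂[R * Real.cos θ, R * Real.sin θ] * Real.cos θ
              + pd 1 u !₂[R * Real.cos θ, R * Real.sin θ] * Real.sin θ)
              * pd 1 u !₂[R * Real.cos θ, R * Real.sin θ]
              / Real.sqrt (1 + gradSq u !₂[R * Real.cos θ, R * Real.sin θ])) * R := by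
    intro θ
    have hpt : Φm (R, θ) = (!₂[R * Real.cos θ, R * Real.sin θ] : E2) := rfl
    show R * (Pf u (Φm (R, θ)) * Real.cos θ + Qf u (Φm (R, θ)) * Real.sin θ) = _
    rw [hpt]
    set x : E2 := (!₂[R * Real.cos θ, R * Real.sin θ] : E2) with hx
    rw [show Real.sqrt (1 + gradSq u x) = Wf u x from rfl]
    have hW2 : Wf u x ^ 2 = 1 + (pd 0 u x ^ 2 + pd 1 u x ^ 2) := by rw [Wf_sq, gradSq_two]
    have hWpos := Wf_pos u x
    rw [Pf, Qf]
    field_simp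
    ring_nf
    linear_combination (-(Real.sin θ)) * hW2
  have stepI : ∫ y in (-π)..π, G1 u (R, y)
      = ∫ θ in (0:ℝ)..(2 * π),
          (Real.sqrt (1 + gradSq u !₂[R * Real.cos θ, R * Real.sin θ]) * Real.sin θ
            - (pd 0 u !₂[R * Real.cos θ, R * Real.sin θ] * Real.cos θ
                + pd 1 u !₂[R * Real.cos θ, R * Real.sin θ] * Real.sin θ)
                * pd 1 u !₂[R * Real.cos θ, R * Real.sin θ]
                / Real.sqrt (1 + gradSq u !₂[R * Real.cos θ, R * Real.sin θ])) * R := by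
    rw [intervalIntegral.integral_congr (g := fun θ =>
      (Real.sqrt (1 + gradSq u !₂[R * Real.cos θ, R * Real.sin θ]) * Real.sin θ
        - (pd 0 u !₂[R * Real.cos θ, R * Real.sin θ] * Real.cos θ
            + pd 1 u !₂[R * Real.cos θ, R * Real.sin θ] * Real.sin θ)
            * pd 1 u !₂[R * Real.cos θ, R * Real.sin θ]
            / Real.sqrt (1 + gradSq u !₂[R * Real.cos θ, R * Real.sin θ])) * R)
      (fun θ _ => hGF θ)]
    have hper : Function.Periodic (fun θ : ℝ =>
        (Real.sqrt (1 + gradSq u !₂[R * Real.cos θ, R * Real.sin θ]) * Real.sin θ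
          - (pd 0 u !₂[R * Real.cos θ, R * Real.sin θ] * Real.cos θ
              + pd 1 u !₂[R * Real.cos θ, R * Real.sin θ] * Real.sin θ)
              * pd 1 u !₂[R * Real.cos θ, R * Real.sin θ]
              / Real.sqrt (1 + gradSq u !₂[R * Real.cos θ, R * Real.sin θ])) * R) (2 * π) := by
      intro θ
      simp only [Real.cos_add_two_pi, Real.sin_add_two_pi]
    have h := hper.intervalIntegral_add_eq (-π) 0
    rw [show -π + 2 * π = π by ring, zero_add] at h
    exact h
  calc ∫ x in ball (0 : E2) R, (pd 1 u x) ^ 2 / Real.sqrt (1 + gradSq u x)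
      = ∫ p in Set.Icc a b, p.1 * hdv (Φm p) := by
        rw [stepA, stepB, stepC, stepD, stepE, stepF, stepG]
    _ = ∫ y in (-π)..π, G1 u (R, y) := by rw [stepH, hbd]
    _ = _ := stepI

end
end

section
/- Let $u : \mathbb{R}^2 \to \mathbb{R}$ be a smooth entire solution of the graphical translator equation $(1+|Du|^2)\Delta u - \sum_{i,j=1}^2 D_iu\,D_ju\,D_iD_ju + (1+|Du|^2)D_2u = 0$ such that $u(x) \to 0$ and $|Du(x)| \to 0$ as $|x| \to \infty$. Then $u \equiv 0$. -/
open Metric Real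

noncomputable section

/-! ### Auxiliary lemmas -/

open Filter Set Topology

/-- 1D second derivative test: at a local max the second derivative is nonpositive. -/
lemma sd_test {g : ℝ → ℝ} (hg : ∀ t, DifferentiableAt ℝ g t)
    (hg' : DifferentiableAt ℝ (deriv g) 0)
    (hmax : IsLocalMax g 0) : deriv (deriv g) 0 ≤ 0 := by
  by_contra hpos
  push_neg at hpos
  have h0 : deriv g 0 = 0 := hmax.deriv_eq_zero
  have hslope := hg'.hasDerivAt
  rw [hasDerivAt_iff_tendsto_slope] at hslope
  have hev : ∀ᶠ t in 𝓝[>] (0:ℝ), 0 < slope (deriv g) 0 t :=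
    (hslope.mono_left (nhdsWithin_mono _ (fun t ht => ne_of_gt ht))).eventually
      (eventually_gt_nhds hpos)
  obtain ⟨δ, hδmem, hδ'⟩ := mem_nhdsGT_iff_exists_Ioo_subset.mp hev
  have hδpos : (0:ℝ) < δ := hδmem
  have hderivpos : ∀ t ∈ Ioo (0:ℝ) δ, 0 < deriv g t := by
    intro t ht
    have := hδ' ht
    simp only [mem_setOf_eq, slope_def_field, h0] at this
    have h2 : (deriv g t - 0) / (t - 0) > 0 := by
      simpa [div_eq_div_iff] using this
    have := mul_pos h2 ht.1
    rw [sub_zero, sub_zero, div_mul_cancel₀] at this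
    · exact this
    · exact ne_of_gt ht.1
  have hmono : StrictMonoOn g (Ico (0:ℝ) δ) := by
    apply strictMonoOn_of_deriv_pos (convex_Ico 0 δ)
    · exact (Differentiable.continuous (fun t => hg t)).continuousOn
    · intro t ht
      rw [interior_Ico] at ht
      exact hderivpos t ht
  obtain ⟨ε, hε, hεmax⟩ := Metric.eventually_nhds_iff.mp hmax
  set t := min δ ε / 2 with ht
  have htpos : 0 < t := by positivity
  have htδ : t < δ := by
    have h1 : min δ ε ≤ δ := min_le_left _ _
    simp only [ht]; linarith
  have htε : |t - 0| < ε := by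
    have h1 : min δ ε ≤ ε := min_le_right _ _
    rw [sub_zero, abs_of_pos htpos]; simp only [ht]; linarith
  have := hmono ⟨le_refl 0, hδpos⟩ ⟨le_of_lt htpos, htδ⟩ htpos
  have := hεmax htε
  linarith

lemma contDiff_pd {f : E2 → ℝ} (hf : ContDiff ℝ (⊤ : ℕ∞) f) (i : Fin 2) :
    ContDiff ℝ (⊤ : ℕ∞) (pd i f) := by
  have h1 : ContDiff ℝ (⊤ : ℕ∞) (fderiv ℝ f) := hf.fderiv_right (by simp)
  exact (ContinuousLinearMap.apply ℝ ℝ (EuclideanSpace.single i 1)).contDiff.comp h1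

lemma pd2_eq {f : E2 → ℝ} (hf : ContDiff ℝ (⊤ : ℕ∞) f) (i j : Fin 2) (x : E2) :
    pd i (pd j f) x
      = fderiv ℝ (fderiv ℝ f) x (EuclideanSpace.single i 1) (EuclideanSpace.single j 1) := by
  have h1 : ContDiff ℝ (⊤ : ℕ∞) (fderiv ℝ f) := hf.fderiv_right (by simp)
  have hc : DifferentiableAt ℝ (fderiv ℝ f) x := (h1.differentiable (by simp)).differentiableAt
  have := fderiv_clm_apply hc (differentiableAt_const (EuclideanSpace.single j 1))
  unfold pd
  rw [this]
  simp

/-- At a local max of a smooth function, the second derivative in any direction is ≤ 0. -/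
lemma hess_nonpos {f : E2 → ℝ} (hf : ContDiff ℝ (⊤ : ℕ∞) f) {z : E2} (hmax : IsLocalMax f z)
    (v : E2) : fderiv ℝ (fderiv ℝ f) z v v ≤ 0 := by
  have hdf : Differentiable ℝ f := hf.differentiable (by simp)
  have hdf' : Differentiable ℝ (fderiv ℝ f) := (hf.fderiv_right (m := (⊤ : ℕ∞)) (by simp)).differentiable (by simp)
  set L : ℝ → E2 := fun t => z + t • v with hL
  have hline : ∀ t : ℝ, HasDerivAt L v t := by
    intro t
    simpa [hL] using ((hasDerivAt_id t).smul_const v).const_add z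
  set g : ℝ → ℝ := fun t => f (L t) with hg
  have hgd : ∀ t, HasDerivAt g (fderiv ℝ f (L t) v) t := fun t =>
    (hdf (L t)).hasFDerivAt.comp_hasDerivAt t (hline t)
  have hderivg : deriv g = fun t => fderiv ℝ f (L t) v := funext fun t => (hgd t).deriv
  have hg2 : HasDerivAt (fun t => fderiv ℝ f (L t) v) (fderiv ℝ (fderiv ℝ f) z v v) 0 := by
    have h1 : HasDerivAt (fun t => fderiv ℝ f (L t)) (fderiv ℝ (fderiv ℝ f) z v) 0 := by
      have h0 : L 0 = z := by simp [hL]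
      have := (hdf' (L 0)).hasFDerivAt.comp_hasDerivAt 0 (hline 0)
      rwa [h0] at this
    have h0 : L 0 = z := by simp [hL]
    have := h1.clm_apply (hasDerivAt_const 0 v)
    simpa [h0] using this
  have hg2' : HasDerivAt (deriv g) (fderiv ℝ (fderiv ℝ f) z v v) 0 := by
    rw [hderivg]; simpa using hg2
  have hmaxg : IsLocalMax g 0 := by
    have hcont : ContinuousAt L 0 :=
      (continuous_const.add (continuous_id.smul continuous_const)).continuousAt
    have h0 : L 0 = z := by simp [hL]
    have : Tendsto L (𝓝 0) (𝓝 z) := by rw [← h0]; exact hcont.tendsto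
    have := this.eventually hmax
    simpa [hg, h0, IsLocalMax, IsMaxFilter] using this
  have := sd_test (fun t => (hgd t).differentiableAt) hg2'.differentiableAt hmaxg
  rwa [hg2'.deriv] at this

/-- Algebraic core of the maximum principle: pairing the psd coefficient matrix
with a nsd Hessian is nonpositive. -/
lemma key_alg (B00 B01 B10 B11 p0 p1 : ℝ)
    (h : ∀ a b : ℝ, a^2*B00 + a*b*B01 + a*b*B10 + b^2*B11 ≤ 0) :
    (1 - p0*p0/(1+(p0^2+p1^2)))*B00 - (p0*p1/(1+(p0^2+p1^2)))*B01
      - (p1*p0/(1+(p0^2+p1^2)))*B10 + (1-p1*p1/(1+(p0^2+p1^2)))*B11 ≤ 0 := by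
  have hs : (0:ℝ) < 1+(p0^2+p1^2) := by positivity
  have e : (1 - p0*p0/(1+(p0^2+p1^2)))*B00 - (p0*p1/(1+(p0^2+p1^2)))*B01
      - (p1*p0/(1+(p0^2+p1^2)))*B10 + (1-p1*p1/(1+(p0^2+p1^2)))*B11
      = ((B00+B11) + (p1^2*B00 - p1*p0*B01 - p1*p0*B10 + p0^2*B11))/(1+(p0^2+p1^2)) := by
    field_simp
    ring
  rw [e]
  apply div_nonpos_of_nonpos_of_nonneg _ (le_of_lt hs)
  nlinarith [h 1 0, h 0 1, h p1 (-p0)]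

/-- Pointwise maximum principle: at a local max of `w`, `Lop u w ≤ 0`. -/
lemma lop_nonpos_at_max (u : E2 → ℝ) {w : E2 → ℝ} (hw : ContDiff ℝ (⊤ : ℕ∞) w) {z : E2}
    (hmax : IsLocalMax w z) : Lop u w z ≤ 0 := by
  have hfz : fderiv ℝ w z = 0 := hmax.fderiv_eq_zero
  have h1 : pd 1 w z = 0 := by simp [pd, hfz]
  have hdir : ∀ a b : ℝ, a^2 * pd 0 (pd 0 w) z + a*b* pd 0 (pd 1 w) z
      + a*b* pd 1 (pd 0 w) z + b^2 * pd 1 (pd 1 w) z ≤ 0 := by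
    intro a b
    have h := hess_nonpos hw hmax
      (a • EuclideanSpace.single 0 1 + b • EuclideanSpace.single 1 1)
    simp only [map_add, map_smul, ContinuousLinearMap.add_apply,
      ContinuousLinearMap.smul_apply, smul_eq_mul] at h
    rw [pd2_eq hw 0 0 z, pd2_eq hw 0 1 z, pd2_eq hw 1 0 z, pd2_eq hw 1 1 z]
    nlinarith [h]
  have hkey := key_alg (pd 0 (pd 0 w) z) (pd 0 (pd 1 w) z) (pd 1 (pd 0 w) z)
    (pd 1 (pd 1 w) z) (pd 0 u z) (pd 1 u z) hdir
  unfold Lop acoef gradSq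
  simp only [Fin.sum_univ_two]
  norm_num
  rw [h1]
  linarith [hkey]

/-- The translator equation implies `Lop u u = 0`. -/
lemma lop_self_eq_zero {u : E2 → ℝ} {x : E2} (heq : TranslatorEq u x) : Lop u u x = 0 := by
  unfold TranslatorEq gradSq at heq
  simp only [Fin.sum_univ_two] at heq
  unfold Lop acoef gradSq
  simp only [Fin.sum_univ_two]
  norm_num
  have hs : (0:ℝ) < 1 + (pd 0 u x ^ 2 + pd 1 u x ^ 2) := by positivity
  field_simp
  nlinarith [heq]

/-- The barrier function `φ(x) = exp(-x₂/2)`. -/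
def phi (x : E2) : ℝ := Real.exp ((-1/2 : ℝ) * x 1)

lemma phi_pos (x : E2) : 0 < phi x := Real.exp_pos _

lemma contDiff_phi : ContDiff ℝ (⊤ : ℕ∞) phi := by
  apply Real.contDiff_exp.comp
  exact (contDiff_const.mul ((EuclideanSpace.proj (1 : Fin 2) : E2 →L[ℝ] ℝ).contDiff (n := (⊤ : ℕ∞))))

lemma hasFDerivAt_phi (x : E2) :
    HasFDerivAt phi ((phi x * (-1/2 : ℝ)) • (EuclideanSpace.proj (1 : Fin 2) : E2 →L[ℝ] ℝ)) x := by
  have h1 : HasFDerivAt (fun y : E2 => (-1/2 : ℝ) * y 1)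
      ((-1/2 : ℝ) • (EuclideanSpace.proj (1 : Fin 2) : E2 →L[ℝ] ℝ)) x :=
    ((EuclideanSpace.proj (1 : Fin 2) : E2 →L[ℝ] ℝ).hasFDerivAt).const_mul (-1/2 : ℝ)
      |>.congr_fderiv rfl
  have h2 := (Real.hasDerivAt_exp ((-1/2 : ℝ) * x 1)).comp_hasFDerivAt x h1
  have e : phi = Real.exp ∘ fun y : E2 => (-1/2 : ℝ) * y 1 := rfl
  rw [e]
  simpa [phi, smul_smul, mul_comm] using h2

lemma pd0_phi (x : E2) : pd 0 phi x = 0 := by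
  unfold pd
  rw [(hasFDerivAt_phi x).fderiv]
  simp [EuclideanSpace.single_apply]

lemma pd1_phi (x : E2) : pd 1 phi x = (-1/2) * phi x := by
  unfold pd
  rw [(hasFDerivAt_phi x).fderiv]
  simp [EuclideanSpace.single_apply]
  ring

lemma pd_const_mul {f : E2 → ℝ} (hf : Differentiable ℝ f) (c : ℝ) (j : Fin 2) (x : E2) :
    pd j (fun y => c * f y) x = c * pd j f x := by
  unfold pd
  rw [fderiv_const_mul (hf x) c]
  simp

lemma pd2_phi0 (i : Fin 2) (x : E2) : pd i (pd 0 phi) x = 0 := by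
  have h : pd 0 phi = fun _ : E2 => (0:ℝ) := funext pd0_phi
  rw [h]
  simp [pd, fderiv_const]

lemma pd2_phi1 (i : Fin 2) (x : E2) : pd i (pd 1 phi) x = (-1/2) * pd i phi x := by
  have hdphi : Differentiable ℝ phi := contDiff_phi.differentiable (by simp)
  have h : pd 1 phi = fun y => (-1/2 : ℝ) * phi y := funext pd1_phi
  rw [h, pd_const_mul hdphi]

/-- `Lop u φ < 0` everywhere. -/
lemma lop_phi_neg (u : E2 → ℝ) (x : E2) : Lop u phi x < 0 := by
  have hs : (0:ℝ) < 1 + gradSq u x := by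
    unfold gradSq; simp only [Fin.sum_univ_two]; positivity
  have ha : acoef u 1 1 x ≤ 1 := by
    have h0 : 0 ≤ pd 1 u x * pd 1 u x / (1 + gradSq u x) :=
      div_nonneg (mul_self_nonneg _) hs.le
    unfold acoef
    norm_num
    linarith
  have hφ := phi_pos x
  unfold Lop
  simp only [Fin.sum_univ_two]
  rw [pd2_phi0, pd2_phi0, pd2_phi1, pd2_phi1, pd0_phi, pd1_phi]
  nlinarith [mul_le_mul_of_nonneg_right ha hφ.le]

/-- Linearity of `Lop` in its second argument for differences with multiples of `φ`. -/
lemma lop_sub_phi {u f : E2 → ℝ} (hf : ContDiff ℝ (⊤ : ℕ∞) f) (c : ℝ) (x : E2) :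
    Lop u (fun y => f y - c * phi y) x = Lop u f x - c * Lop u phi x := by
  have hdf : Differentiable ℝ f := hf.differentiable (by simp)
  have hdφ : Differentiable ℝ phi := contDiff_phi.differentiable (by simp)
  have hpd1 : ∀ (j : Fin 2), pd j (fun y => f y - c * phi y)
      = fun y => pd j f y - c * pd j phi y := by
    intro j
    funext y
    unfold pd
    rw [fderiv_fun_sub (hdf y) ((hdφ y).const_mul c), fderiv_const_mul (hdφ y) c]
    simp
  have hpdf : ∀ j : Fin 2, Differentiable ℝ (pd j f) :=
    fun j => (contDiff_pd hf j).differentiable (by simp)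
  have hpdφ : ∀ j : Fin 2, Differentiable ℝ (pd j phi) :=
    fun j => (contDiff_pd contDiff_phi j).differentiable (by simp)
  have hpd2 : ∀ (i j : Fin 2), pd i (pd j (fun y => f y - c * phi y)) x
      = pd i (pd j f) x - c * pd i (pd j phi) x := by
    intro i j
    have e1 : pd i (fun y => pd j f y - c * pd j phi y) x
        = fderiv ℝ (fun y => pd j f y - c * pd j phi y) x (EuclideanSpace.single i 1) := rfl
    rw [hpd1 j, e1, fderiv_fun_sub (hpdf j x) ((hpdφ j x).const_mul c),
      fderiv_const_mul (hpdφ j x) c]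
    simp [pd]
  have hpd1' : ∀ (j : Fin 2), pd j (fun y => f y - c * phi y) x
      = pd j f x - c * pd j phi x := by
    intro j
    rw [hpd1 j]
  unfold Lop
  simp only [Fin.sum_univ_two]
  rw [hpd2 0 0, hpd2 0 1, hpd2 1 0, hpd2 1 1, hpd1' 1]
  ring

/-- Main step: a decaying entire solution is nonpositive. -/
lemma sol_nonpos {u : E2 → ℝ} (hu : ContDiff ℝ (⊤ : ℕ∞) u)
    (heq : ∀ x : E2, TranslatorEq u x)
    (hu0 : Tendsto u (cocompact E2) (nhds 0)) :
    ∀ x, u x ≤ 0 := by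
  by_contra hcon
  push_neg at hcon
  obtain ⟨x₀, hx₀⟩ := hcon
  set M := u x₀ with hM
  set ε := (M/2) / phi x₀ with hε
  have hεpos : 0 < ε := div_pos (by linarith) (phi_pos x₀)
  set w : E2 → ℝ := fun y => u y - ε * phi y with hw
  have hwx₀ : w x₀ = M/2 := by
    have hφ : phi x₀ ≠ 0 := ne_of_gt (phi_pos x₀)
    simp only [hw, hε, ← hM]
    field_simp
    ring
  have hwle : ∀ y, w y ≤ u y := by
    intro y
    have := phi_pos y
    simp only [hw]
    nlinarith
  -- outside a compact set, u < M/2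
  have hsmall : ∀ᶠ y in cocompact E2, |u y| < M/2 := by
    have h2 : ∀ᶠ z in 𝓝 (0:ℝ), |z| < M/2 := by
      have : Tendsto (fun z : ℝ => |z|) (𝓝 0) (𝓝 0) := by
        simpa using continuous_abs.tendsto (0:ℝ)
      exact this.eventually (eventually_lt_nhds (by linarith : (0:ℝ) < M/2))
    exact hu0.eventually h2
  obtain ⟨K, hK, hKs⟩ := hasBasis_cocompact.eventually_iff.mp hsmall
  obtain ⟨R, hR⟩ := hK.isBounded.subset_closedBall 0
  set B := Metric.closedBall (0:E2) (max R ‖x₀‖) with hB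
  have hx₀B : x₀ ∈ B := by
    simp [hB, mem_closedBall_zero_iff, le_max_right]
  have hKB : K ⊆ B := hR.trans (Metric.closedBall_subset_closedBall (le_max_left _ _))
  have hwcont : Continuous w := by
    apply (hu.continuous).sub
    exact continuous_const.mul contDiff_phi.continuous
  obtain ⟨z, hzB, hzmax⟩ := (isCompact_closedBall (0:E2) _).exists_isMaxOn
    ⟨x₀, hx₀B⟩ hwcont.continuousOn
  have hglobal : ∀ y, w y ≤ w z := by
    intro y
    by_cases hy : y ∈ B
    · exact hzmax hy
    · have hyK : y ∉ K := fun h => hy (hKB h)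
      have := hKs hyK
      have h1 : u y < M/2 := lt_of_le_of_lt (le_abs_self _) this
      have h2 : w y < M/2 := lt_of_le_of_lt (hwle y) h1
      have h3 : w x₀ ≤ w z := hzmax hx₀B
      apply le_of_lt
      calc w y ≤ u y := hwle y
        _ < M/2 := h1
        _ = w x₀ := hwx₀.symm
        _ ≤ w z := h3
  have hlocmax : IsLocalMax w z := Filter.Eventually.of_forall hglobal
  have hwC : ContDiff ℝ (⊤ : ℕ∞) w := hu.sub (contDiff_const.mul contDiff_phi)
  have h1 : Lop u w z ≤ 0 := lop_nonpos_at_max u hwC hlocmax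
  have h2 : Lop u w z = Lop u u z - ε * Lop u phi z := lop_sub_phi hu ε z
  have h3 : Lop u u z = 0 := lop_self_eq_zero (heq z)
  have h4 : Lop u phi z < 0 := lop_phi_neg u z
  rw [h2, h3] at h1
  nlinarith

lemma translator_neg {u : E2 → ℝ} {x : E2} (h : TranslatorEq u x) :
    TranslatorEq (fun y => -u y) x := by
  have hpd : ∀ (j : Fin 2) (y : E2), pd j (fun y => -u y) y = -pd j u y := by
    intro j y; unfold pd; rw [fderiv_fun_neg]; simp
  have hpd2 : ∀ (i j : Fin 2) (y : E2), pd i (pd j (fun y => -u y)) y = -pd i (pd j u) y := by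
    intro i j y
    have hfun : pd j (fun y => -u y) = fun y => -pd j u y := by
      funext y'; exact hpd j y'
    rw [hfun]; unfold pd; rw [fderiv_fun_neg]; simp [pd]
  have hg : gradSq (fun y => -u y) x = gradSq u x := by
    unfold gradSq; simp only [Fin.sum_univ_two, hpd]; ring
  unfold TranslatorEq at h ⊢
  rw [hg]
  simp only [Fin.sum_univ_two] at h ⊢
  simp only [hpd, hpd2]
  ring_nf
  ring_nf at h
  linarith

open Filter in
/-- **The entire-graph case of the main theorem**: an entire smooth solution of the graphical
translator equation with `u → 0` and `|Du| → 0` at infinity vanishes identically. -/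
theorem entire_translator_graph_is_plane (u : E2 → ℝ) (hu : ContDiff ℝ (⊤ : ℕ∞) u)
    (heq : ∀ x : E2, TranslatorEq u x)
    (hu0 : Tendsto u (cocompact E2) (nhds 0))
    (hDu0 : Tendsto (fun x => Real.sqrt (gradSq u x)) (cocompact E2) (nhds 0)) :
    ∀ x, u x = 0 := by
  intro x
  have h1 := sol_nonpos hu heq hu0 x
  have hv : ContDiff ℝ (⊤ : ℕ∞) (fun y => -u y) := hu.neg
  have hveq : ∀ y : E2, TranslatorEq (fun y => -u y) y := fun y => translator_neg (heq y)
  have hv0 : Tendsto (fun y => -u y) (cocompact E2) (nhds 0) := by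
    simpa using hu0.neg
  have h2 := sol_nonpos hv hveq hv0 x
  linarith

end
end
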